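/- arXiv:2005.08699 — 8 statements merged into one kernel-verified Lean document; each statement's English description precedes it below -/
import Mathlib

section
/- There exist constants C ≥ c > 0 such that c·‖θ − θ0‖ ≤ λ₊(θ) − λ₋(θ) ≤ C·‖θ − θ0‖ for all θ ∈ Σ (note that λ₊(θ) − λ₋(θ) = 2‖F(θ)‖). -/
/-- Second-order Taylor-type bound: if a smooth function vanishes to first order at `θ0`
and its Hessian there is bounded above by `-a0`, then locally `d θ ≤ -(a0/4)‖θ-θ0‖²`. -/
lemma quad_upper_bound {E : Type*} [NormedAddCommGroup E] [NormedSpace ℝ E]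
    (d : E → ℝ) (hdC : ContDiff ℝ (⊤ : ℕ∞) d) (θ0 : E) (hd0 : d θ0 = 0)
    (hd1 : fderiv ℝ d θ0 = 0) (a0 : ℝ) (ha0 : 0 < a0)
    (hHess : ∀ ζ : E, iteratedFDeriv ℝ 2 d θ0 ![ζ, ζ] ≤ -a0 * ‖ζ‖ ^ 2) :
    ∃ δ > 0, ∀ θ : E, dist θ θ0 < δ → d θ ≤ -(a0 / 4) * ‖θ - θ0‖ ^ 2 := by
  have hg2 : Continuous (iteratedFDeriv ℝ 2 d) :=
    hdC.continuous_iteratedFDeriv (WithTop.coe_le_coe.mpr le_top)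
  obtain ⟨δ, hδ, hδ2⟩ := Metric.continuousAt_iff.mp (hg2.continuousAt (x := θ0))
    (a0 / 2) (by positivity)
  refine ⟨δ, hδ, fun θ hθδ => ?_⟩
  set h : E := θ - θ0 with hh
  have hnorm : ‖h‖ < δ := by rwa [hh, ← dist_eq_norm]
  -- second derivative bound on the segment
  have hsec : ∀ x : E, dist x θ0 < δ →
      iteratedFDeriv ℝ 2 d x ![h, h] ≤ -(a0 / 2) * ‖h‖ ^ 2 := by
    intro x hx
    have e2 : dist (iteratedFDeriv ℝ 2 d x) (iteratedFDeriv ℝ 2 d θ0) < a0 / 2 := hδ2 hx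
    rw [dist_eq_norm] at e2
    have e3 : ‖(iteratedFDeriv ℝ 2 d x - iteratedFDeriv ℝ 2 d θ0) ![h, h]‖ ≤
        ‖iteratedFDeriv ℝ 2 d x - iteratedFDeriv ℝ 2 d θ0‖ * (‖h‖ * ‖h‖) := by
      have := (iteratedFDeriv ℝ 2 d x - iteratedFDeriv ℝ 2 d θ0).le_opNorm ![h, h]
      simpa [Fin.prod_univ_two, mul_assoc] using this
    have e4 : iteratedFDeriv ℝ 2 d x ![h, h]
        = iteratedFDeriv ℝ 2 d θ0 ![h, h]
          + (iteratedFDeriv ℝ 2 d x - iteratedFDeriv ℝ 2 d θ0) ![h, h] := by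
      rw [ContinuousMultilinearMap.sub_apply]; ring
    have e1 := hHess h
    have e5 : (iteratedFDeriv ℝ 2 d x - iteratedFDeriv ℝ 2 d θ0) ![h, h] ≤
        ‖iteratedFDeriv ℝ 2 d x - iteratedFDeriv ℝ 2 d θ0‖ * (‖h‖ * ‖h‖) :=
      (le_abs_self _).trans (by simpa [Real.norm_eq_abs] using e3)
    have hn : (0:ℝ) ≤ ‖h‖ := norm_nonneg _
    nlinarith [e1, e4, e5, e2, sq_nonneg ‖h‖]
  -- the line
  set L : ℝ → E := fun t => θ0 + t • h with hL
  have hLd : ∀ t : ℝ, HasDerivAt L h t := by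
    intro t
    have : HasDerivAt (fun t : ℝ => t • h) ((1 : ℝ) • h) t :=
      (hasDerivAt_id t).smul_const h
    simpa [hL, one_smul] using this.const_add θ0
  have hLball : ∀ t ∈ Set.Icc (0:ℝ) 1, dist (L t) θ0 < δ := by
    intro t ht
    have : dist (L t) θ0 = ‖t • h‖ := by simp [hL, dist_eq_norm]
    rw [this, norm_smul, Real.norm_eq_abs, abs_of_nonneg ht.1]
    calc t * ‖h‖ ≤ 1 * ‖h‖ := by
          have := ht.2; nlinarith [norm_nonneg h]
      _ < δ := by simpa using hnorm
  have hd_diff : Differentiable ℝ d := hdC.differentiable (by simp)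
  have hfd : ContDiff ℝ (⊤ : ℕ∞) (fderiv ℝ d) := hdC.fderiv_right (by simp)
  have hfd_diff : Differentiable ℝ (fderiv ℝ d) := hfd.differentiable (by simp)
  have hφ : ∀ t : ℝ, HasDerivAt (fun t => d (L t)) (fderiv ℝ d (L t) h) t := by
    intro t
    exact (hd_diff (L t)).hasFDerivAt.comp_hasDerivAt t (hLd t)
  have hφ₁ : ∀ t : ℝ, HasDerivAt (fun t => fderiv ℝ d (L t) h)
      (iteratedFDeriv ℝ 2 d (L t) ![h, h]) t := by
    intro t
    have h1 : HasFDerivAt (fun x => fderiv ℝ d x h)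
        ((ContinuousLinearMap.apply ℝ ℝ h).comp (fderiv ℝ (fderiv ℝ d) (L t))) (L t) :=
      (ContinuousLinearMap.apply ℝ ℝ h).hasFDerivAt.comp (L t)
        (hfd_diff (L t)).hasFDerivAt
    have h2 := h1.comp_hasDerivAt t (hLd t)
    have h3 : iteratedFDeriv ℝ 2 d (L t) ![h, h]
        = ((ContinuousLinearMap.apply ℝ ℝ h).comp (fderiv ℝ (fderiv ℝ d) (L t))) h := by
      rw [iteratedFDeriv_two_apply]
      simp [ContinuousLinearMap.apply]
    rw [h3]; exact h2
  -- first derivative bound on [0,1]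
  have key1 : ∀ t ∈ Set.Icc (0:ℝ) 1, fderiv ℝ d (L t) h ≤ -(a0 / 2) * ‖h‖ ^ 2 * t := by
    intro t ht
    set χ : ℝ → ℝ := fun s => fderiv ℝ d (L s) h + (a0 / 2) * ‖h‖ ^ 2 * s with hχ
    have hχd : ∀ s : ℝ, HasDerivAt χ
        (iteratedFDeriv ℝ 2 d (L s) ![h, h] + (a0 / 2) * ‖h‖ ^ 2) s := by
      intro s
      have h4 : HasDerivAt (fun s : ℝ => (a0 / 2) * ‖h‖ ^ 2 * s)
          ((a0 / 2) * ‖h‖ ^ 2) s := by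
        simpa using (hasDerivAt_id s).const_mul ((a0 / 2) * ‖h‖ ^ 2)
      exact (hφ₁ s).add h4
    have hanti : AntitoneOn χ (Set.Icc 0 1) := by
      apply antitoneOn_of_deriv_nonpos (convex_Icc 0 1)
      · exact fun s _ => (hχd s).continuousAt.continuousWithinAt
      · intro s hs
        exact ((hχd s).differentiableAt).differentiableWithinAt
      · intro s hs
        rw [interior_Icc] at hs
        rw [(hχd s).deriv]
        have := hsec (L s) (hLball s ⟨le_of_lt hs.1, le_of_lt hs.2⟩)
        linarith
    have h5 : χ t ≤ χ 0 := hanti (Set.left_mem_Icc.mpr zero_le_one) ht ht.1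
    have h6 : χ 0 = 0 := by
      simp [hχ, hL, hd1]
    rw [h6] at h5
    simp only [hχ] at h5
    linarith
  -- integrate once more
  set ψ : ℝ → ℝ := fun s => d (L s) + (a0 / 4) * ‖h‖ ^ 2 * s ^ 2 with hψ
  have hψd : ∀ s : ℝ, HasDerivAt ψ
      (fderiv ℝ d (L s) h + (a0 / 4) * ‖h‖ ^ 2 * (2 * s)) s := by
    intro s
    have h4 : HasDerivAt (fun s : ℝ => (a0 / 4) * ‖h‖ ^ 2 * s ^ 2)
        ((a0 / 4) * ‖h‖ ^ 2 * (2 * s)) s := by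
      have := (hasDerivAt_pow 2 s).const_mul ((a0 / 4) * ‖h‖ ^ 2)
      simpa [mul_comm, mul_assoc, mul_left_comm] using this
    exact (hφ s).add h4
  have hanti : AntitoneOn ψ (Set.Icc 0 1) := by
    apply antitoneOn_of_deriv_nonpos (convex_Icc 0 1)
    · exact fun s _ => (hψd s).continuousAt.continuousWithinAt
    · intro s hs
      exact ((hψd s).differentiableAt).differentiableWithinAt
    · intro s hs
      rw [interior_Icc] at hs
      rw [(hψd s).deriv]
      have := key1 s ⟨le_of_lt hs.1, le_of_lt hs.2⟩
      nlinarith [sq_nonneg ‖h‖, hs.1, hs.2]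
  have h5 : ψ 1 ≤ ψ 0 := hanti (Set.left_mem_Icc.mpr zero_le_one)
    (Set.right_mem_Icc.mpr zero_le_one) zero_le_one
  have h6 : ψ 0 = 0 := by simp [hψ, hL, hd0]
  have h7 : L 1 = θ := by simp [hL, hh]
  rw [h6] at h5
  simp only [hψ, h7, one_pow, mul_one] at h5
  linarith

theorem stmt0
    (θ0 : EuclideanSpace ℝ (Fin 2)) (S : Set (EuclideanSpace ℝ (Fin 2)))
    (hS : IsCompact S) (hθ0 : θ0 ∈ interior S)
    (F0 : EuclideanSpace ℝ (Fin 2) → ℝ)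
    (F : EuclideanSpace ℝ (Fin 2) → EuclideanSpace ℝ (Fin 3))
    (hF0 : ContDiff ℝ (⊤ : ℕ∞) F0) (hF : ContDiff ℝ (⊤ : ℕ∞) F)
    (hF00 : F0 θ0 = 0) (hFz : F θ0 = 0)
    (d : EuclideanSpace ℝ (Fin 2) → ℝ)
    (hd : ∀ θ, d θ = F0 θ ^ 2 - ‖F θ‖ ^ 2)
    (hdle : ∀ θ ∈ S, d θ ≤ 0)
    (hdzero : ∀ θ ∈ S, d θ = 0 → θ = θ0)
    (hd1 : fderiv ℝ d θ0 = 0)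
    (a0 : ℝ) (ha0 : 0 < a0)
    (hHess : ∀ ζ : EuclideanSpace ℝ (Fin 2),
      iteratedFDeriv ℝ 2 d θ0 ![ζ, ζ] ≤ -a0 * ‖ζ‖ ^ 2) :
    ∃ c C : ℝ, 0 < c ∧ c ≤ C ∧ ∀ θ ∈ S,
      c * ‖θ - θ0‖ ≤ (F0 θ + ‖F θ‖) - (F0 θ - ‖F θ‖) ∧
      (F0 θ + ‖F θ‖) - (F0 θ - ‖F θ‖) ≤ C * ‖θ - θ0‖ := by
  have hθ0S : θ0 ∈ S := interior_subset hθ0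
  -- smoothness of d
  have hdC : ContDiff ℝ (⊤ : ℕ∞) d := by
    have : d = fun θ => F0 θ ^ 2 - ‖F θ‖ ^ 2 := funext hd
    rw [this]
    exact (hF0.pow 2).sub (hF.norm_sq ℝ)
  have hd0 : d θ0 = 0 := by rw [hd, hF00, hFz]; simp
  -- local quadratic bound
  obtain ⟨δ, hδ, hquad⟩ := quad_upper_bound d hdC θ0 hd0 hd1 a0 ha0 hHess
  -- near θ0 : ‖F θ‖ ≥ (√a0/2)‖θ-θ0‖
  set c1 : ℝ := Real.sqrt a0 / 2 with hc1
  have hc1pos : 0 < c1 := by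
    have := Real.sqrt_pos.mpr ha0
    positivity
  have hnear : ∀ θ : EuclideanSpace ℝ (Fin 2), dist θ θ0 < δ →
      c1 * ‖θ - θ0‖ ≤ ‖F θ‖ := by
    intro θ hθ
    have h1 := hquad θ hθ
    rw [hd] at h1
    have h2 : (a0 / 4) * ‖θ - θ0‖ ^ 2 ≤ ‖F θ‖ ^ 2 := by nlinarith [sq_nonneg (F0 θ)]
    have h3 : (c1 * ‖θ - θ0‖) ^ 2 ≤ ‖F θ‖ ^ 2 := by
      have hs : c1 ^ 2 = a0 / 4 := by
        rw [hc1, div_pow, Real.sq_sqrt (le_of_lt ha0)]; norm_num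
      calc (c1 * ‖θ - θ0‖) ^ 2 = c1 ^ 2 * ‖θ - θ0‖ ^ 2 := by ring
        _ = (a0 / 4) * ‖θ - θ0‖ ^ 2 := by rw [hs]
        _ ≤ ‖F θ‖ ^ 2 := h2
    have h4 : 0 ≤ c1 * ‖θ - θ0‖ := by positivity
    nlinarith [norm_nonneg (F θ)]
  -- S is bounded
  obtain ⟨R0, hR0⟩ := hS.isBounded.subset_closedBall θ0
  set R : ℝ := max R0 1 with hR
  have hRpos : (0:ℝ) < R := lt_of_lt_of_le one_pos (le_max_right _ _)
  have hRS : ∀ θ ∈ S, ‖θ - θ0‖ ≤ R := by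
    intro θ hθ
    have := hR0 hθ
    rw [Metric.mem_closedBall, dist_eq_norm] at this
    exact this.trans (le_max_left _ _)
  -- away from θ0: min of ‖F‖ on the compact set K
  set K : Set (EuclideanSpace ℝ (Fin 2)) := S ∩ (Metric.ball θ0 δ)ᶜ with hK
  have hKc : IsCompact K := hS.inter_right (Metric.isOpen_ball.isClosed_compl)
  have hKpos : ∀ θ ∈ K, 0 < ‖F θ‖ := by
    rintro θ ⟨hθS, hθb⟩
    have hne : θ ≠ θ0 := by
      intro he
      apply hθb
      rw [he]
      exact Metric.mem_ball_self hδ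
    have hlt : d θ < 0 := lt_of_le_of_ne (hdle θ hθS) (fun he => hne (hdzero θ hθS he))
    rw [hd] at hlt
    nlinarith [sq_nonneg (F0 θ), norm_nonneg (F θ)]
  obtain ⟨ε, hε, hKlow⟩ : ∃ ε > 0, ∀ θ ∈ K, ε ≤ ‖F θ‖ := by
    rcases K.eq_empty_or_nonempty with he | hne
    · exact ⟨1, one_pos, fun θ hθ => by rw [he] at hθ; exact absurd hθ (Set.notMem_empty θ)⟩
    · obtain ⟨x, hxK, hx⟩ := hKc.exists_isMinOn hne
        ((hF.continuous.norm).continuousOn)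
      exact ⟨‖F x‖, hKpos x hxK, fun θ hθ => hx hθ⟩
  set c2 : ℝ := ε / R with hc2
  have hc2pos : 0 < c2 := div_pos hε hRpos
  -- upper bound: Lipschitz estimate on the closed ball
  have hBcomp : IsCompact (Metric.closedBall θ0 R) := isCompact_closedBall θ0 R
  obtain ⟨M, hM⟩ := hBcomp.exists_bound_of_continuousOn
    (((hF.fderiv_right (m := (⊤ : ℕ∞)) (by simp))).continuous.continuousOn)
  have hMnn : (0:ℝ) ≤ M := le_trans (norm_nonneg _)
    (hM θ0 (Metric.mem_closedBall_self (le_of_lt hRpos)))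
  have hlip : ∀ θ ∈ S, ‖F θ‖ ≤ M * ‖θ - θ0‖ := by
    intro θ hθ
    have hθB : θ ∈ Metric.closedBall θ0 R := by
      rw [Metric.mem_closedBall, dist_eq_norm]; exact hRS θ hθ
    have hθ0B : θ0 ∈ Metric.closedBall θ0 R := Metric.mem_closedBall_self (le_of_lt hRpos)
    have := (convex_closedBall θ0 R).norm_image_sub_le_of_norm_fderiv_le
      (fun x _ => (hF.differentiable (by simp)).differentiableAt)
      (fun x hx => hM x hx) hθ0B hθB
    simpa [hFz] using this
  -- assemble
  refine ⟨min c1 c2, max (2 * M) (min c1 c2), lt_min hc1pos hc2pos, le_max_right _ _,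
    fun θ hθ => ?_⟩
  have hFle : ∀ x, (F0 x + ‖F x‖) - (F0 x - ‖F x‖) = 2 * ‖F x‖ := fun x => by ring
  rw [hFle]
  constructor
  · -- lower bound
    have hlow : min c1 c2 * ‖θ - θ0‖ ≤ ‖F θ‖ := by
      by_cases hcase : dist θ θ0 < δ
      · calc min c1 c2 * ‖θ - θ0‖ ≤ c1 * ‖θ - θ0‖ :=
            mul_le_mul_of_nonneg_right (min_le_left _ _) (norm_nonneg _)
          _ ≤ ‖F θ‖ := hnear θ hcase
      · have hθK : θ ∈ K := ⟨hθ, fun hb => hcase (Metric.mem_ball.mp hb)⟩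
        calc min c1 c2 * ‖θ - θ0‖ ≤ c2 * R :=
            mul_le_mul (min_le_right _ _) (hRS θ hθ) (norm_nonneg _) (le_of_lt hc2pos)
          _ = ε := by rw [hc2]; field_simp
          _ ≤ ‖F θ‖ := hKlow θ hθK
    nlinarith [norm_nonneg (F θ)]
  · -- upper bound
    calc 2 * ‖F θ‖ ≤ 2 * (M * ‖θ - θ0‖) := by linarith [hlip θ hθ]
      _ = (2 * M) * ‖θ - θ0‖ := by ring
      _ ≤ max (2 * M) (min c1 c2) * ‖θ - θ0‖ :=
          mul_le_mul_of_nonneg_right (le_max_left _ _) (norm_nonneg _)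
end

section
/- One has (Hess ‖F‖²)(θ0)(ζ,ζ) ≥ a0·‖ζ‖² for all ζ ∈ ℝ² (so the Hessian of δ² := ‖F‖² at θ0 is positive definite with constant ρ = a0), and consequently the vectors ∂₁F(θ0) and ∂₂F(θ0) are linearly independent in ℝ³ (equivalently, the total derivative DF(θ0) : ℝ² → ℝ³ is injective). -/
open scoped RealInnerProductSpace

lemma hess_norm_sq {E F : Type*} [NormedAddCommGroup E] [InnerProductSpace ℝ E]
    [NormedAddCommGroup F] [InnerProductSpace ℝ F]
    (G : E → F) (hG : ContDiff ℝ (⊤ : ℕ∞) G) (x : E) (hx : G x = 0) (ζ : E) :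
    iteratedFDeriv ℝ 2 (fun θ => ‖G θ‖ ^ 2) x ![ζ, ζ] = 2 * ‖fderiv ℝ G x ζ‖ ^ 2 := by
  have hGd : Differentiable ℝ G := hG.differentiable (by simp)
  set A : E → F := fun θ => fderiv ℝ G θ ζ with hA_def
  have hfd : ContDiff ℝ (⊤ : ℕ∞) (fderiv ℝ G) := hG.fderiv_right (by simp)
  have hA : Differentiable ℝ A :=
    fun y => ((hfd.differentiable (by simp)) y).clm_apply (differentiableAt_const ζ)
  have hfun : (fun θ => ‖G θ‖ ^ 2) = fun θ => ⟪G θ, G θ⟫ := by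
    funext θ; rw [real_inner_self_eq_norm_sq]
  rw [hfun]
  set u : E → ℝ := fun θ => ⟪G θ, G θ⟫ with hu_def
  have hu : ContDiff ℝ (⊤ : ℕ∞) u := hG.inner ℝ hG
  rw [iteratedFDeriv_two_apply]
  simp only [Matrix.cons_val_zero, Matrix.cons_val_one, Matrix.head_cons]
  -- fderiv (fderiv u) x ζ ζ = fderiv (fun θ => fderiv u θ ζ) x ζ
  have hswap : fderiv ℝ (fun θ => fderiv ℝ u θ ζ) x = (fderiv ℝ (fderiv ℝ u) x).flip ζ := by
    have hc : DifferentiableAt ℝ (fderiv ℝ u) x :=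
      (hu.fderiv_right (m := (⊤ : ℕ∞)) (by simp)).differentiable (by simp) x
    rw [fderiv_clm_apply hc (differentiableAt_const ζ)]
    simp
  -- formula for fderiv u θ ζ
  have hu1 : ∀ θ, fderiv ℝ u θ ζ = ⟪G θ, A θ⟫ + ⟪A θ, G θ⟫ := by
    intro θ
    have h := ((hGd θ).hasFDerivAt.inner ℝ (hGd θ).hasFDerivAt).fderiv
    rw [hu_def, h]
    simp [fderivInnerCLM_apply, hA_def]
  have hφ : (fun θ => fderiv ℝ u θ ζ) = fun θ => ⟪G θ, A θ⟫ + ⟪A θ, G θ⟫ := funext hu1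
  -- derivative of ψ at x applied to ζ
  have h1 : HasFDerivAt (fun θ => ⟪G θ, A θ⟫)
      ((fderivInnerCLM ℝ (G x, A x)).comp ((fderiv ℝ G x).prod (fderiv ℝ A x))) x :=
    (hGd x).hasFDerivAt.inner ℝ (hA x).hasFDerivAt
  have h2 : HasFDerivAt (fun θ => ⟪A θ, G θ⟫)
      ((fderivInnerCLM ℝ (A x, G x)).comp ((fderiv ℝ A x).prod (fderiv ℝ G x))) x :=
    (hA x).hasFDerivAt.inner ℝ (hGd x).hasFDerivAt
  have hsum := (h1.add h2).fderiv
  have key : ((fderiv ℝ (fderiv ℝ u) x) ζ) ζ = fderiv ℝ (fun θ => fderiv ℝ u θ ζ) x ζ := by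
    rw [hswap]; rfl
  rw [key, hφ, show (fun θ => ⟪G θ, A θ⟫ + ⟪A θ, G θ⟫) = (fun θ => ⟪G θ, A θ⟫) + (fun θ => ⟪A θ, G θ⟫) from rfl, hsum]
  simp only [ContinuousLinearMap.add_apply, ContinuousLinearMap.comp_apply,
    ContinuousLinearMap.prod_apply, fderivInnerCLM_apply, hx]
  have hAx : A x = fderiv ℝ G x ζ := rfl
  rw [hAx]
  simp [real_inner_self_eq_norm_sq]
  ring

theorem stmt2
    (θ0 : EuclideanSpace ℝ (Fin 2)) (S : Set (EuclideanSpace ℝ (Fin 2)))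
    (hS : IsCompact S) (hθ0 : θ0 ∈ interior S)
    (F0 : EuclideanSpace ℝ (Fin 2) → ℝ)
    (F : EuclideanSpace ℝ (Fin 2) → EuclideanSpace ℝ (Fin 3))
    (hF0 : ContDiff ℝ (⊤ : ℕ∞) F0) (hF : ContDiff ℝ (⊤ : ℕ∞) F)
    (hF00 : F0 θ0 = 0) (hFz : F θ0 = 0)
    (d : EuclideanSpace ℝ (Fin 2) → ℝ)
    (hd : ∀ θ, d θ = F0 θ ^ 2 - ‖F θ‖ ^ 2)
    (hdle : ∀ θ ∈ S, d θ ≤ 0)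
    (hdzero : ∀ θ ∈ S, d θ = 0 → θ = θ0)
    (hd1 : fderiv ℝ d θ0 = 0)
    (a0 : ℝ) (ha0 : 0 < a0)
    (hHess : ∀ ζ : EuclideanSpace ℝ (Fin 2),
      iteratedFDeriv ℝ 2 d θ0 ![ζ, ζ] ≤ -a0 * ‖ζ‖ ^ 2) :
    (∀ ζ : EuclideanSpace ℝ (Fin 2),
      a0 * ‖ζ‖ ^ 2 ≤ iteratedFDeriv ℝ 2 (fun θ => ‖F θ‖ ^ 2) θ0 ![ζ, ζ]) ∧
    LinearIndependent ℝ
      ![fderiv ℝ F θ0 (EuclideanSpace.single 0 1),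
        fderiv ℝ F θ0 (EuclideanSpace.single 1 1)] ∧
    Function.Injective (fderiv ℝ F θ0) := by
  have hF0sq : (fun θ => F0 θ ^ 2) = fun θ => ‖F0 θ‖ ^ 2 := by
    funext θ; rw [Real.norm_eq_abs, sq_abs]
  have h1c : ContDiff ℝ (2:ℕ) (fun θ => ‖F0 θ‖ ^ 2) := by
    rw [← hF0sq]; exact (hF0.pow 2).of_le (WithTop.coe_le_coe.mpr le_top)
  have h2c : ContDiff ℝ (2:ℕ) (fun θ => -‖F θ‖ ^ 2) := by
    exact ((hF.norm_sq ℝ).of_le (WithTop.coe_le_coe.mpr le_top)).neg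
  have hdeq : d = (fun θ => ‖F0 θ‖ ^ 2) + fun θ => -‖F θ‖ ^ 2 := by
    funext θ
    have := congrFun hF0sq θ
    simp only [Pi.add_apply, hd θ, this, sub_eq_add_neg]
  -- second derivative of ‖F‖² at θ0
  have hHG : ∀ ζ, iteratedFDeriv ℝ 2 (fun θ => ‖F θ‖ ^ 2) θ0 ![ζ, ζ]
      = 2 * ‖fderiv ℝ F θ0 ζ‖ ^ 2 := fun ζ => hess_norm_sq F hF θ0 hFz ζ
  have hHF0 : ∀ ζ, iteratedFDeriv ℝ 2 (fun θ => ‖F0 θ‖ ^ 2) θ0 ![ζ, ζ]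
      = 2 * ‖fderiv ℝ F0 θ0 ζ‖ ^ 2 := fun ζ => hess_norm_sq F0 hF0 θ0 hF00 ζ
  have hsplit : ∀ ζ, iteratedFDeriv ℝ 2 d θ0 ![ζ, ζ]
      = 2 * ‖fderiv ℝ F0 θ0 ζ‖ ^ 2
        - iteratedFDeriv ℝ 2 (fun θ => ‖F θ‖ ^ 2) θ0 ![ζ, ζ] := by
    intro ζ
    rw [hdeq, iteratedFDeriv_add_apply h1c.contDiffAt h2c.contDiffAt]
    have hneg : iteratedFDeriv ℝ 2 (fun θ => -‖F θ‖ ^ 2) θ0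
        = -iteratedFDeriv ℝ 2 (fun θ => ‖F θ‖ ^ 2) θ0 := by
      exact iteratedFDeriv_neg_apply
    simp only [ContinuousMultilinearMap.add_apply, hneg,
      ContinuousMultilinearMap.neg_apply, hHF0 ζ]
    ring
  have key : ∀ ζ : EuclideanSpace ℝ (Fin 2),
      a0 * ‖ζ‖ ^ 2 ≤ iteratedFDeriv ℝ 2 (fun θ => ‖F θ‖ ^ 2) θ0 ![ζ, ζ] := by
    intro ζ
    have h := hHess ζ
    rw [hsplit ζ] at h
    have hpos : (0:ℝ) ≤ 2 * ‖fderiv ℝ F0 θ0 ζ‖ ^ 2 := by positivity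
    nlinarith [h, hpos]
  have key2 : ∀ ζ : EuclideanSpace ℝ (Fin 2),
      a0 * ‖ζ‖ ^ 2 ≤ 2 * ‖fderiv ℝ F θ0 ζ‖ ^ 2 := by
    intro ζ; have := key ζ; rwa [hHG ζ] at this
  have hinj : Function.Injective (fderiv ℝ F θ0) := by
    intro x y hxy
    have hz : fderiv ℝ F θ0 (x - y) = 0 := by rw [map_sub, hxy, sub_self]
    have := key2 (x - y)
    rw [hz] at this
    simp only [norm_zero] at this
    have : ‖x - y‖ ^ 2 ≤ 0 := by nlinarith
    have : ‖x - y‖ = 0 := by nlinarith [norm_nonneg (x - y)]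
    rwa [norm_eq_zero, sub_eq_zero] at this
  refine ⟨key, ?_, hinj⟩
  rw [LinearIndependent.pair_iff]
  intro s t hst
  have hcomb : fderiv ℝ F θ0 (s • EuclideanSpace.single 0 1 + t • EuclideanSpace.single 1 1) = 0 := by
    rw [map_add, map_smul, map_smul, hst]
  have hz : (s • EuclideanSpace.single 0 1 + t • EuclideanSpace.single 1 1
      : EuclideanSpace ℝ (Fin 2)) = 0 := by
    apply hinj
    rw [hcomb, map_zero]
  constructor
  · have := congrArg (· 0) hz
    simpa [EuclideanSpace.single_apply] using this
  · have := congrArg (· 1) hz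
    simpa [EuclideanSpace.single_apply] using this
end

section
/- There exists a ∈ [0, 1) such that 2·(DF0(θ0)(ζ))² ≤ a²·(Hess ‖F‖²)(θ0)(ζ,ζ) for all ζ ∈ ℝ², where DF0(θ0)(ζ) = ⟨∇F0(θ0), ζ⟩ is the directional derivative of F0 at θ0 in direction ζ. -/
theorem stmt3
    (θ0 : EuclideanSpace ℝ (Fin 2)) (S : Set (EuclideanSpace ℝ (Fin 2)))
    (hS : IsCompact S) (hθ0 : θ0 ∈ interior S)
    (F0 : EuclideanSpace ℝ (Fin 2) → ℝ)
    (F : EuclideanSpace ℝ (Fin 2) → EuclideanSpace ℝ (Fin 3))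
    (hF0 : ContDiff ℝ (⊤ : ℕ∞) F0) (hF : ContDiff ℝ (⊤ : ℕ∞) F)
    (hF00 : F0 θ0 = 0) (hFz : F θ0 = 0)
    (d : EuclideanSpace ℝ (Fin 2) → ℝ)
    (hd : ∀ θ, d θ = F0 θ ^ 2 - ‖F θ‖ ^ 2)
    (hdle : ∀ θ ∈ S, d θ ≤ 0)
    (hdzero : ∀ θ ∈ S, d θ = 0 → θ = θ0)
    (hd1 : fderiv ℝ d θ0 = 0)
    (a0 : ℝ) (ha0 : 0 < a0)
    (hHess : ∀ ζ : EuclideanSpace ℝ (Fin 2),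
      iteratedFDeriv ℝ 2 d θ0 ![ζ, ζ] ≤ -a0 * ‖ζ‖ ^ 2) :
    ∃ a : ℝ, 0 ≤ a ∧ a < 1 ∧ ∀ ζ : EuclideanSpace ℝ (Fin 2),
      2 * (fderiv ℝ F0 θ0 ζ) ^ 2 ≤
        a ^ 2 * iteratedFDeriv ℝ 2 (fun θ => ‖F θ‖ ^ 2) θ0 ![ζ, ζ] := by
  set g : EuclideanSpace ℝ (Fin 2) → ℝ := fun θ => ‖F θ‖ ^ 2 with hg
  set p : EuclideanSpace ℝ (Fin 2) → ℝ := fun θ => F0 θ ^ 2 with hp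
  have hgC : ContDiff ℝ (⊤ : ℕ∞) g := hF.norm_sq ℝ
  have hpC : ContDiff ℝ (⊤ : ℕ∞) p := hF0.pow 2
  have hdeq : d = fun θ => p θ - g θ := funext fun θ => hd θ
  have hL : ∀ ζ, iteratedFDeriv ℝ 2 d θ0 ![ζ, ζ] =
      2 * (fderiv ℝ F0 θ0 ζ) ^ 2 - iteratedFDeriv ℝ 2 g θ0 ![ζ, ζ] := by
    intro ζ
    -- first derivative of d as a function
    have hdF : DifferentiableAt ℝ F0 θ0 := hF0.differentiable (by simp) θ0
    have hfd : fderiv ℝ d = fun θ => fderiv ℝ p θ - fderiv ℝ g θ := by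
      funext θ
      rw [hdeq]
      exact fderiv_sub (hpC.differentiable (by simp) θ) (hgC.differentiable (by simp) θ)
    have hfp : fderiv ℝ p = fun θ => F0 θ • fderiv ℝ F0 θ + F0 θ • fderiv ℝ F0 θ := by
      funext θ
      have : p = fun θ => F0 θ * F0 θ := by funext θ; simp [hp, sq]
      rw [this, fderiv_fun_mul (hF0.differentiable (by simp) θ) (hF0.differentiable (by simp) θ)]
    -- second derivative of p at θ0
    have hF0' : ContDiff ℝ (⊤ : ℕ∞) (fderiv ℝ F0) := hF0.fderiv_right (by simp)
    have hsm : fderiv ℝ (fun θ => F0 θ • fderiv ℝ F0 θ) θ0 =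
        (fderiv ℝ F0 θ0).smulRight (fderiv ℝ F0 θ0) := by
      rw [fderiv_fun_smul (hF0.differentiable (by simp) θ0) (hF0'.differentiable (by simp) θ0)]
      simp [hF00]
    have hp2 : fderiv ℝ (fderiv ℝ p) θ0 ζ ζ = 2 * (fderiv ℝ F0 θ0 ζ) ^ 2 := by
      rw [hfp]
      have hdiff : DifferentiableAt ℝ (fun θ => F0 θ • fderiv ℝ F0 θ) θ0 :=
        (hF0.differentiable (by simp) θ0).smul (hF0'.differentiable (by simp) θ0)
      rw [fderiv_fun_add hdiff hdiff, hsm]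
      simp [sq]
      ring
    have hd2 : fderiv ℝ (fderiv ℝ d) θ0 ζ ζ =
        fderiv ℝ (fderiv ℝ p) θ0 ζ ζ - fderiv ℝ (fderiv ℝ g) θ0 ζ ζ := by
      rw [hfd]
      have hpd : DifferentiableAt ℝ (fderiv ℝ p) θ0 :=
        (hpC.fderiv_right (m := (⊤ : ℕ∞)) (by simp)).differentiable (by simp) θ0
      have hgd : DifferentiableAt ℝ (fderiv ℝ g) θ0 :=
        (hgC.fderiv_right (m := (⊤ : ℕ∞)) (by simp)).differentiable (by simp) θ0
      rw [fderiv_fun_sub hpd hgd]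
      simp
    rw [iteratedFDeriv_two_apply, iteratedFDeriv_two_apply]
    show fderiv ℝ (fderiv ℝ d) θ0 ζ ζ = _ - fderiv ℝ (fderiv ℝ g) θ0 ζ ζ
    rw [hd2, hp2]
  -- Quadratic form bound for Hess g
  set M : ℝ := max ‖iteratedFDeriv ℝ 2 g θ0‖ a0 with hM
  have hMpos : 0 < M := lt_of_lt_of_le ha0 (le_max_right _ _)
  have hQbound : ∀ ζ : EuclideanSpace ℝ (Fin 2),
      iteratedFDeriv ℝ 2 g θ0 ![ζ, ζ] ≤ M * ‖ζ‖ ^ 2 := by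
    intro ζ
    have h1 := (iteratedFDeriv ℝ 2 g θ0).le_opNorm ![ζ, ζ]
    have h2 : ∏ i, ‖(![ζ, ζ] : Fin 2 → EuclideanSpace ℝ (Fin 2)) i‖ = ‖ζ‖ ^ 2 := by
      simp [Fin.prod_univ_two, sq]
    rw [h2] at h1
    have h3 : iteratedFDeriv ℝ 2 g θ0 ![ζ, ζ] ≤ ‖iteratedFDeriv ℝ 2 g θ0 ![ζ, ζ]‖ :=
      le_abs_self _
    have h4 : ‖iteratedFDeriv ℝ 2 g θ0‖ * ‖ζ‖ ^ 2 ≤ M * ‖ζ‖ ^ 2 := by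
      apply mul_le_mul_of_nonneg_right (le_max_left _ _) (by positivity)
    linarith
  have ha0M : a0 / M ≤ 1 := (div_le_one hMpos).2 (le_max_right _ _)
  refine ⟨Real.sqrt (1 - a0 / M), Real.sqrt_nonneg _, ?_, ?_⟩
  · have h1 : 1 - a0 / M < 1 := by
      have : 0 < a0 / M := div_pos ha0 hMpos
      linarith
    calc Real.sqrt (1 - a0 / M) < Real.sqrt 1 := by
          apply Real.sqrt_lt_sqrt (by linarith) h1
      _ = 1 := Real.sqrt_one
  · intro ζ
    have hsq : Real.sqrt (1 - a0 / M) ^ 2 = 1 - a0 / M :=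
      Real.sq_sqrt (by linarith)
    rw [hsq]
    have hH := hHess ζ
    rw [hL ζ] at hH
    have hQ := hQbound ζ
    have key : a0 / M * iteratedFDeriv ℝ 2 g θ0 ![ζ, ζ] ≤ a0 * ‖ζ‖ ^ 2 := by
      have := mul_le_mul_of_nonneg_left hQ (le_of_lt (div_pos ha0 hMpos))
      calc a0 / M * iteratedFDeriv ℝ 2 g θ0 ![ζ, ζ] ≤ a0 / M * (M * ‖ζ‖ ^ 2) := this
        _ = a0 * ‖ζ‖ ^ 2 := by field_simp
    show 2 * (fderiv ℝ F0 θ0 ζ) ^ 2 ≤ (1 - a0 / M) * iteratedFDeriv ℝ 2 g θ0 ![ζ, ζ]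
    nlinarith [hH, key]
end

section
/- There exist ã ∈ (0, 1) and an open neighborhood V0 of θ0 with V0 ⊆ Σ such that |F0(θ)| ≤ ã·‖F(θ)‖ for all θ ∈ V0. -/
open Metric Set

-- Key second-order bound: if second derivative is ≤ -c in a ball and first deriv vanishes
-- at the center, then d θ ≤ -(c/2)‖θ-θ0‖² in the ball.
lemma key_bound {E : Type*} [NormedAddCommGroup E] [NormedSpace ℝ E]
    (d : E → ℝ) (hdC : ContDiff ℝ (⊤ : ℕ∞) d) (θ0 : E) (hd0 : d θ0 = 0)
    (hd1 : fderiv ℝ d θ0 = 0) (c : ℝ) (δ : ℝ)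
    (hδ : ∀ x ∈ Metric.ball θ0 δ, ∀ ζ : E, fderiv ℝ (fderiv ℝ d) x ζ ζ ≤ -c * ‖ζ‖ ^ 2) :
    ∀ θ ∈ Metric.ball θ0 δ, d θ ≤ -(c / 2) * ‖θ - θ0‖ ^ 2 := by
  intro θ hθ
  set h : E := θ - θ0 with hh
  have hdiff : Differentiable ℝ d := hdC.differentiable (by simp)
  have hfdC : ContDiff ℝ (⊤ : ℕ∞) (fderiv ℝ d) := hdC.fderiv_right (by simp)
  have hfdiff : Differentiable ℝ (fderiv ℝ d) := hfdC.differentiable (by simp)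
  have hmem : ∀ t ∈ Set.Icc (0:ℝ) 1, θ0 + t • h ∈ Metric.ball θ0 δ := by
    intro t ht
    have hball : ‖h‖ < δ := by
      have := hθ; rw [Metric.mem_ball, dist_eq_norm] at this; simpa [hh] using this
    rw [Metric.mem_ball, dist_eq_norm]
    have : ‖t • h‖ = |t| * ‖h‖ := by rw [norm_smul, Real.norm_eq_abs]
    calc ‖θ0 + t • h - θ0‖ = ‖t • h‖ := by rw [add_sub_cancel_left]
      _ = |t| * ‖h‖ := this
      _ ≤ 1 * ‖h‖ := by
          apply mul_le_mul_of_nonneg_right _ (norm_nonneg _)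
          rw [abs_le]; exact ⟨by linarith [ht.1], ht.2⟩
      _ < δ := by simpa using hball
  -- the curve
  have hγ : ∀ t : ℝ, HasDerivAt (fun s : ℝ => θ0 + s • h) h t := by
    intro t
    simpa using ((hasDerivAt_id t).smul_const h).const_add θ0
  -- g1 t = fderiv d (γ t) h + c * t * ‖h‖²
  set g1 : ℝ → ℝ := fun t => fderiv ℝ d (θ0 + t • h) h + c * t * ‖h‖ ^ 2 with hg1
  set g : ℝ → ℝ := fun t => d (θ0 + t • h) + c / 2 * t ^ 2 * ‖h‖ ^ 2 with hg
  have hg' : ∀ t : ℝ, HasDerivAt g (g1 t) t := by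
    intro t
    have h1 : HasDerivAt (fun s : ℝ => d (θ0 + s • h)) (fderiv ℝ d (θ0 + t • h) h) t :=
      ((hdiff _).hasFDerivAt).comp_hasDerivAt t (hγ t)
    have h2 : HasDerivAt (fun s : ℝ => c / 2 * s ^ 2 * ‖h‖ ^ 2) (c * t * ‖h‖ ^ 2) t := by
      have := ((hasDerivAt_pow 2 t).const_mul (c / 2)).mul_const (‖h‖ ^ 2)
      refine this.congr_deriv ?_
      ring
    exact h1.add h2
  have hg1' : ∀ t : ℝ, HasDerivAt g1 (fderiv ℝ (fderiv ℝ d) (θ0 + t • h) h h + c * ‖h‖ ^ 2) t := by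
    intro t
    have h1 : HasDerivAt (fun s : ℝ => fderiv ℝ d (θ0 + s • h))
        (fderiv ℝ (fderiv ℝ d) (θ0 + t • h) h) t :=
      ((hfdiff _).hasFDerivAt).comp_hasDerivAt t (hγ t)
    have h2 : HasDerivAt (fun s : ℝ => fderiv ℝ d (θ0 + s • h) h)
        (fderiv ℝ (fderiv ℝ d) (θ0 + t • h) h h) t :=
      ((ContinuousLinearMap.apply ℝ ℝ h).hasFDerivAt).comp_hasDerivAt t h1
    have h3 : HasDerivAt (fun s : ℝ => c * s * ‖h‖ ^ 2) (c * ‖h‖ ^ 2) t := by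
      have := ((hasDerivAt_id t).const_mul c).mul_const (‖h‖ ^ 2)
      simpa using this
    exact h2.add h3
  -- g1 ≤ 0 on [0,1]
  have hg1nonpos : ∀ t ∈ Set.Icc (0:ℝ) 1, g1 t ≤ 0 := by
    have hanti : AntitoneOn g1 (Set.Icc 0 1) := by
      apply antitoneOn_of_deriv_nonpos (convex_Icc 0 1)
      · exact fun t _ => (hg1' t).continuousAt.continuousWithinAt
      · exact fun t _ => (hg1' t).differentiableAt.differentiableWithinAt
      · intro t ht
        rw [interior_Icc] at ht
        rw [(hg1' t).deriv]
        have := hδ _ (hmem t ⟨le_of_lt ht.1, le_of_lt ht.2⟩) h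
        linarith
    intro t ht
    have h0 : g1 0 = 0 := by simp [hg1, hd1]
    calc g1 t ≤ g1 0 := hanti (by constructor <;> norm_num) ht ht.1
      _ = 0 := h0
  -- g antitone on [0,1]
  have hganti : AntitoneOn g (Set.Icc 0 1) := by
    apply antitoneOn_of_deriv_nonpos (convex_Icc 0 1)
    · exact fun t _ => (hg' t).continuousAt.continuousWithinAt
    · exact fun t _ => (hg' t).differentiableAt.differentiableWithinAt
    · intro t ht
      rw [interior_Icc] at ht
      rw [(hg' t).deriv]
      exact hg1nonpos t ⟨le_of_lt ht.1, le_of_lt ht.2⟩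
  have : g 1 ≤ g 0 := hganti (by constructor <;> norm_num) (by constructor <;> norm_num) zero_le_one
  have hg0 : g 0 = 0 := by simp [hg, hd0]
  have hg1v : g 1 = d θ + c / 2 * ‖h‖ ^ 2 := by simp [hg, hh]
  rw [hg0, hg1v] at this
  linarith

theorem stmt4
    (θ0 : EuclideanSpace ℝ (Fin 2)) (S : Set (EuclideanSpace ℝ (Fin 2)))
    (hS : IsCompact S) (hθ0 : θ0 ∈ interior S)
    (F0 : EuclideanSpace ℝ (Fin 2) → ℝ)
    (F : EuclideanSpace ℝ (Fin 2) → EuclideanSpace ℝ (Fin 3))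
    (hF0 : ContDiff ℝ (⊤ : ℕ∞) F0) (hF : ContDiff ℝ (⊤ : ℕ∞) F)
    (hF00 : F0 θ0 = 0) (hFz : F θ0 = 0)
    (d : EuclideanSpace ℝ (Fin 2) → ℝ)
    (hd : ∀ θ, d θ = F0 θ ^ 2 - ‖F θ‖ ^ 2)
    (hdle : ∀ θ ∈ S, d θ ≤ 0)
    (hdzero : ∀ θ ∈ S, d θ = 0 → θ = θ0)
    (hd1 : fderiv ℝ d θ0 = 0)
    (a0 : ℝ) (ha0 : 0 < a0)
    (hHess : ∀ ζ : EuclideanSpace ℝ (Fin 2),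
      iteratedFDeriv ℝ 2 d θ0 ![ζ, ζ] ≤ -a0 * ‖ζ‖ ^ 2) :
    ∃ a : ℝ, 0 < a ∧ a < 1 ∧ ∃ V0 : Set (EuclideanSpace ℝ (Fin 2)),
      IsOpen V0 ∧ θ0 ∈ V0 ∧ V0 ⊆ S ∧ ∀ θ ∈ V0, |F0 θ| ≤ a * ‖F θ‖ := by
  have hdC : ContDiff ℝ (⊤ : ℕ∞) d := by
    have hde : d = fun θ => F0 θ ^ 2 - ‖F θ‖ ^ 2 := funext hd
    rw [hde]
    exact (hF0.pow 2).sub (hF.norm_sq ℝ)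
  have hd0 : d θ0 = 0 := by rw [hd, hF00, hFz]; simp
  -- Lipschitz bound for F near θ0
  obtain ⟨K, t, htmem, hlip⟩ := (hF.contDiffAt (x := θ0)).of_le (by norm_num) |>.exists_lipschitzOnWith
  -- continuity of the second derivative
  have hcont : Continuous (iteratedFDeriv ℝ 2 d) := hdC.continuous_iteratedFDeriv (WithTop.coe_le_coe.mpr (le_top : (2:ℕ∞) ≤ ⊤))
  have hclose : ∀ᶠ x in nhds θ0, ‖iteratedFDeriv ℝ 2 d x - iteratedFDeriv ℝ 2 d θ0‖ < a0 / 2 := by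
    have := (hcont.tendsto θ0) (Metric.ball_mem_nhds _ (by positivity : (0:ℝ) < a0 / 2))
    filter_upwards [this] with x hx
    simp only [Set.mem_preimage, Metric.mem_ball, dist_eq_norm] at hx
    exact hx
  obtain ⟨δ1, hδ1pos, hδ1⟩ := Metric.eventually_nhds_iff_ball.mp hclose
  obtain ⟨δ2, hδ2pos, hδ2⟩ := Metric.isOpen_iff.mp isOpen_interior θ0 hθ0
  obtain ⟨δ3, hδ3pos, hδ3⟩ := Metric.mem_nhds_iff.mp htmem
  set δ : ℝ := min δ1 (min δ2 δ3) with hδdef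
  have hδpos : 0 < δ := lt_min hδ1pos (lt_min hδ2pos hδ3pos)
  have hballS : Metric.ball θ0 δ ⊆ S :=
    fun x hx => interior_subset (hδ2 (Metric.ball_subset_ball (le_trans (min_le_right _ _) (min_le_left _ _)) hx))
  have hballt : Metric.ball θ0 δ ⊆ t :=
    hδ3.trans' (Metric.ball_subset_ball (le_trans (min_le_right _ _) (min_le_right _ _)))
  -- second derivative bound on the ball
  have hHessball : ∀ x ∈ Metric.ball θ0 δ, ∀ ζ : EuclideanSpace ℝ (Fin 2),
      fderiv ℝ (fderiv ℝ d) x ζ ζ ≤ -(a0 / 2) * ‖ζ‖ ^ 2 := by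
    intro x hx ζ
    have hx1 : x ∈ Metric.ball θ0 δ1 := Metric.ball_subset_ball (min_le_left _ _) hx
    have hdiffnorm := hδ1 x hx1
    have happ : fderiv ℝ (fderiv ℝ d) x ζ ζ = iteratedFDeriv ℝ 2 d x ![ζ, ζ] := by
      rw [iteratedFDeriv_two_apply]; simp
    have happ0 : fderiv ℝ (fderiv ℝ d) θ0 ζ ζ = iteratedFDeriv ℝ 2 d θ0 ![ζ, ζ] := by
      rw [iteratedFDeriv_two_apply]; simp
    have hdiffapp : iteratedFDeriv ℝ 2 d x ![ζ, ζ] - iteratedFDeriv ℝ 2 d θ0 ![ζ, ζ]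
        ≤ a0 / 2 * ‖ζ‖ ^ 2 := by
      have h1 : (iteratedFDeriv ℝ 2 d x - iteratedFDeriv ℝ 2 d θ0) ![ζ, ζ]
          = iteratedFDeriv ℝ 2 d x ![ζ, ζ] - iteratedFDeriv ℝ 2 d θ0 ![ζ, ζ] := by simp
      have h2 := (iteratedFDeriv ℝ 2 d x - iteratedFDeriv ℝ 2 d θ0).le_opNorm ![ζ, ζ]
      rw [h1] at h2
      have h3 : (∏ i : Fin 2, ‖(![ζ, ζ] : Fin 2 → EuclideanSpace ℝ (Fin 2)) i‖) = ‖ζ‖ * ‖ζ‖ := by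
        simp [Fin.prod_univ_two]
      rw [h3] at h2
      calc iteratedFDeriv ℝ 2 d x ![ζ, ζ] - iteratedFDeriv ℝ 2 d θ0 ![ζ, ζ]
          ≤ ‖iteratedFDeriv ℝ 2 d x - iteratedFDeriv ℝ 2 d θ0‖ * (‖ζ‖ * ‖ζ‖) :=
            le_trans (le_abs_self _) (by rw [← Real.norm_eq_abs]; exact h2)
        _ ≤ a0 / 2 * (‖ζ‖ * ‖ζ‖) := by
            apply mul_le_mul_of_nonneg_right (le_of_lt hdiffnorm) (by positivity)
        _ = a0 / 2 * ‖ζ‖ ^ 2 := by ring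
    have := hHess ζ
    rw [happ]
    linarith
  -- key bound
  have hkey := key_bound d hdC θ0 hd0 hd1 (a0 / 2) δ hHessball
  -- Lipschitz constant
  set Kr : ℝ := (K : ℝ) + 1 with hKr
  have hKrpos : 0 < Kr := by positivity
  have hFbound : ∀ θ ∈ Metric.ball θ0 δ, ‖F θ‖ ≤ Kr * ‖θ - θ0‖ := by
    intro θ hθ
    have h1 : dist (F θ) (F θ0) ≤ K * dist θ θ0 :=
      hlip.dist_le_mul θ (hballt hθ) θ0 (hballt (Metric.mem_ball_self hδpos))
    rw [hFz, dist_zero_right, dist_eq_norm] at h1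
    calc ‖F θ‖ ≤ K * ‖θ - θ0‖ := h1
      _ ≤ Kr * ‖θ - θ0‖ := by
          apply mul_le_mul_of_nonneg_right _ (norm_nonneg _)
          simp [hKr]
  -- choose c'
  set c : ℝ := min (a0 / 4 / Kr ^ 2) (1 / 2) with hc
  have hcpos : 0 < c := lt_min (by positivity) (by norm_num)
  have hclt : c ≤ 1 / 2 := min_le_right _ _
  have hmain : ∀ θ ∈ Metric.ball θ0 δ, F0 θ ^ 2 ≤ (1 - c) * ‖F θ‖ ^ 2 := by
    intro θ hθ
    have h1 := hkey θ hθ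
    have h2 := hFbound θ hθ
    have h3 : ‖F θ‖ ^ 2 ≤ Kr ^ 2 * ‖θ - θ0‖ ^ 2 := by
      have := mul_self_le_mul_self (norm_nonneg (F θ)) h2
      calc ‖F θ‖ ^ 2 = ‖F θ‖ * ‖F θ‖ := sq ‖F θ‖
        _ ≤ (Kr * ‖θ - θ0‖) * (Kr * ‖θ - θ0‖) := this
        _ = Kr ^ 2 * ‖θ - θ0‖ ^ 2 := by ring
    have h4 : d θ = F0 θ ^ 2 - ‖F θ‖ ^ 2 := hd θ
    -- F0² ≤ ‖F‖² - (a0/4)‖h‖² ≤ ‖F‖² - (a0/4/Kr²)‖F‖² ≤ (1-c)‖F‖²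
    have h5 : F0 θ ^ 2 ≤ ‖F θ‖ ^ 2 - a0 / 4 * ‖θ - θ0‖ ^ 2 := by
      rw [h4] at h1; linarith
    have h6 : a0 / 4 / Kr ^ 2 * ‖F θ‖ ^ 2 ≤ a0 / 4 * ‖θ - θ0‖ ^ 2 := by
      rw [div_mul_eq_mul_div, div_le_iff₀ (by positivity)]
      calc a0 / 4 * ‖F θ‖ ^ 2 ≤ a0 / 4 * (Kr ^ 2 * ‖θ - θ0‖ ^ 2) :=
            mul_le_mul_of_nonneg_left h3 (by positivity)
        _ = a0 / 4 * ‖θ - θ0‖ ^ 2 * Kr ^ 2 := by ring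
    have h7 : c * ‖F θ‖ ^ 2 ≤ a0 / 4 / Kr ^ 2 * ‖F θ‖ ^ 2 :=
      mul_le_mul_of_nonneg_right (min_le_left _ _) (by positivity)
    nlinarith
  -- conclude
  have h1c : (0:ℝ) < 1 - c := by linarith
  have hapos : 0 < Real.sqrt (1 - c) := Real.sqrt_pos.mpr h1c
  have halt : Real.sqrt (1 - c) < 1 := by
    have h := Real.sqrt_lt_sqrt (le_of_lt h1c) (show 1 - c < 1 by linarith)
    rwa [Real.sqrt_one] at h
  refine ⟨Real.sqrt (1 - c), hapos, halt, Metric.ball θ0 δ,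
    Metric.isOpen_ball, Metric.mem_ball_self hδpos, hballS, ?_⟩
  · intro θ hθ
    have h1 := hmain θ hθ
    have h2 : |F0 θ| = Real.sqrt (F0 θ ^ 2) := (Real.sqrt_sq_eq_abs _).symm
    rw [h2]
    calc Real.sqrt (F0 θ ^ 2) ≤ Real.sqrt ((1 - c) * ‖F θ‖ ^ 2) := Real.sqrt_le_sqrt h1
      _ = Real.sqrt (1 - c) * Real.sqrt (‖F θ‖ ^ 2) := Real.sqrt_mul (by linarith) _
      _ = Real.sqrt (1 - c) * ‖F θ‖ := by rw [Real.sqrt_sq (norm_nonneg _)]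
end

section
/- There exist C > 0 and δ0 > 0 such that for every δ ∈ (0, δ0] and every θ ∈ Σ one has ‖F_δ(θ)‖ ≥ δ/C; i.e. the perturbed family F_δ is bounded away from zero on Σ by a constant proportional to δ. -/
theorem stmt7
    (θ0 : EuclideanSpace ℝ (Fin 2)) (S : Set (EuclideanSpace ℝ (Fin 2)))
    (hS : IsCompact S) (hθ0 : θ0 ∈ interior S)
    (F : EuclideanSpace ℝ (Fin 2) → EuclideanSpace ℝ (Fin 3))
    (hF : ContDiff ℝ (⊤ : ℕ∞) F) (hFz : F θ0 = 0)
    (c : ℝ) (hc : 0 < c)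
    (hlow : ∀ θ ∈ S, c * ‖θ - θ0‖ ≤ 2 * ‖F θ‖)
    (g : EuclideanSpace ℝ (Fin 2) → ℝ) (hg : ContDiff ℝ (⊤ : ℕ∞) g)
    (hg01 : ∀ x, g x ∈ Set.Icc (0 : ℝ) 1)
    (hg1 : ∀ x ∈ Metric.closedBall (0 : EuclideanSpace ℝ (Fin 2)) (1/2), g x = 1)
    (hg0 : ∀ x ∉ Metric.ball (0 : EuclideanSpace ℝ (Fin 2)) 1, g x = 0)
    (v : EuclideanSpace ℝ (Fin 3)) (hv : ‖v‖ = 1)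
    (hv1 : (inner ℝ v (fderiv ℝ F θ0 (EuclideanSpace.single 0 1)) : ℝ) = 0)
    (hv2 : (inner ℝ v (fderiv ℝ F θ0 (EuclideanSpace.single 1 1)) : ℝ) = 0)
    (Fd : ℝ → EuclideanSpace ℝ (Fin 2) → EuclideanSpace ℝ (Fin 3))
    (hFd : ∀ δ θ, Fd δ θ = F θ + ((δ / 8) * g ((c / δ) • (θ - θ0))) • v) :
    ∃ C > (0 : ℝ), ∃ δ0 > (0 : ℝ), ∀ δ : ℝ, 0 < δ → δ ≤ δ0 →
      ∀ θ ∈ S, δ / C ≤ ‖Fd δ θ‖ := by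
  set h : EuclideanSpace ℝ (Fin 2) → ℝ := fun θ => (inner ℝ v (F θ) : ℝ) with hhdef
  have hh : ContDiff ℝ (⊤ : ℕ∞) h := (innerSL ℝ v).contDiff.comp hF
  -- the derivative of the v-component of F vanishes at θ0
  have hderiv0 : fderiv ℝ h θ0 = 0 := by
    have hdF : DifferentiableAt ℝ F θ0 := (hF.differentiable (by simp)).differentiableAt
    have hcomp : fderiv ℝ h θ0 = (innerSL ℝ v).comp (fderiv ℝ F θ0) := by
      have := fderiv_comp θ0 ((innerSL ℝ v).differentiableAt) hdF
      rw [(innerSL ℝ v).fderiv] at this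
      exact this
    rw [hcomp]
    apply ContinuousLinearMap.coe_injective
    apply (EuclideanSpace.basisFun (Fin 2) ℝ).toBasis.ext
    intro i
    fin_cases i
    · simpa [EuclideanSpace.basisFun_apply] using hv1
    · simpa [EuclideanSpace.basisFun_apply] using hv2
  have hcd8 : (0:ℝ) < c/8 := by positivity
  have hcont : ContinuousAt (fderiv ℝ h) θ0 := (hh.continuous_fderiv (by simp)).continuousAt
  rw [Metric.continuousAt_iff] at hcont
  obtain ⟨r, hr0, hrb⟩ := hcont (c/8) hcd8
  have hbound : ∀ x ∈ Metric.closedBall θ0 (r/2), ‖fderiv ℝ h x‖ ≤ c/8 := by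
    intro x hx
    have hxr : dist x θ0 < r :=
      lt_of_le_of_lt (Metric.mem_closedBall.mp hx) (by linarith)
    have := hrb hxr
    rw [dist_eq_norm, hderiv0, sub_zero] at this
    exact this.le
  have hdiff : ∀ x ∈ Metric.closedBall θ0 (r/2), DifferentiableAt ℝ h x :=
    fun x _ => (hh.differentiable (by simp)).differentiableAt
  have hmv : ∀ θ ∈ Metric.closedBall θ0 (r/2), |h θ| ≤ (c/8) * ‖θ - θ0‖ := by
    intro θ hθ
    have h0 : h θ0 = 0 := by simp [hhdef, hFz]
    have := (convex_closedBall θ0 (r/2)).norm_image_sub_le_of_norm_fderiv_le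
      hdiff hbound (Metric.mem_closedBall_self (by linarith)) hθ
    rw [h0, sub_zero] at this
    exact this
  refine ⟨16, by norm_num, c * r, by positivity, ?_⟩
  intro δ hδ0 hδr θ hθ
  by_cases hcase : c * ‖θ - θ0‖ ≤ δ/2
  · -- close to θ0 : g = 1 there, and the v-component of F is small
    have hgx : g ((c/δ) • (θ - θ0)) = 1 := by
      apply hg1
      rw [Metric.mem_closedBall, dist_zero_right, norm_smul, Real.norm_eq_abs,
        abs_of_pos (by positivity : (0:ℝ) < c/δ)]
      rw [div_mul_eq_mul_div, div_le_div_iff₀ hδ0 (by norm_num : (0:ℝ) < 2)]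
      linarith
    have hn : ‖θ - θ0‖ ≤ δ/(2*c) := by
      rw [le_div_iff₀ (by positivity)]
      nlinarith
    have hθball : θ ∈ Metric.closedBall θ0 (r/2) := by
      rw [Metric.mem_closedBall, dist_eq_norm]
      nlinarith [norm_nonneg (θ - θ0)]
    have hhθ : |h θ| ≤ δ/16 := by
      calc |h θ| ≤ c/8 * ‖θ - θ0‖ := hmv θ hθball
        _ ≤ c/8 * (δ/(2*c)) := by
            exact mul_le_mul_of_nonneg_left hn (by positivity)
        _ = δ/16 := by field_simp; ring
    have hFdv : (inner ℝ v (Fd δ θ) : ℝ) = h θ + δ/8 := by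
      rw [hFd, inner_add_right, real_inner_smul_right, hgx,
        real_inner_self_eq_norm_sq, hv]
      ring
    have habs : |(inner ℝ v (Fd δ θ) : ℝ)| ≤ ‖Fd δ θ‖ := by
      have := abs_real_inner_le_norm v (Fd δ θ)
      rwa [hv, one_mul] at this
    have hlb : δ/16 ≤ |(inner ℝ v (Fd δ θ) : ℝ)| := by
      rw [hFdv]
      have h1 : -(δ/16) ≤ h θ := by
        have := neg_abs_le (h θ); linarith
      have h2 : δ/16 ≤ h θ + δ/8 := by linarith
      exact h2.trans (le_abs_self _)
    linarith
  · -- far from θ0 : ‖F θ‖ dominates the perturbation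
    push_neg at hcase
    have hFθ : δ/4 ≤ ‖F θ‖ := by
      have := hlow θ hθ; linarith
    have hpert : ‖((δ/8) * g ((c/δ) • (θ - θ0))) • v‖ ≤ δ/8 := by
      rw [norm_smul, hv, mul_one, Real.norm_eq_abs]
      have hg' := hg01 ((c/δ) • (θ - θ0))
      rw [abs_of_nonneg (mul_nonneg (by positivity) hg'.1)]
      nlinarith [hg'.1, hg'.2]
    have htri : ‖F θ‖ ≤ ‖Fd δ θ‖ + ‖((δ/8) * g ((c/δ) • (θ - θ0))) • v‖ := by
      have heq : F θ = Fd δ θ - ((δ/8) * g ((c/δ) • (θ - θ0))) • v := by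
        rw [hFd]; abel
      rw [heq]
      exact norm_sub_le _ _
    linarith
end

section
/- For every e ∈ σ(H̃) ∩ I' one has dist(e, σ(H)) ≤ ‖HΠ‖² · (ℓ_{I'}/Λ_I)² · (1/d_{I'}). -/
/-!
Write `Q = 1 - P`, `R₀ = R 0` and `Rₑ = R e`. Comparing the corner inverses of `Q H Q` and
`Q (H - e) Q` gives the resolvent expansion `Rₑ = R₀ + e R₀² + e² Rₑ R₀²`. Hence, for the
perturbation `E = e² P H Q Rₑ R₀² Q H P`, the Schur complement of `H - e + E` with respect to `P`
is exactly `N - e Y`, where `H̃ = Z N Z` and `Z² = Y⁻¹` on `K`. Since `H̃ - e = Z (N - e Y) Z`,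
invertibility of `H + E - e` would make `H̃ - e` invertible on `K`; so `e ∈ σ(H̃)` forces
`e ∈ σ(H + E)`, which lies within `‖E‖` of `σ(H)` because `H` is self-adjoint. Finally
`‖E‖ ≤ e² ‖H P‖² ‖Rₑ‖ ‖R₀‖²`, and `‖Rₜ‖ ≤ 1 / c` whenever `(t - c, t + c) ⊆ I̊`: then `Rₜ + c⁻¹ P`
inverts the self-adjoint operator `Q (H - t) Q + c P`, whose spectrum avoids `(-c, c)`.
-/

open Metric

theorem IsSelfAdjoint.mul_self {R : Type*} [Mul R] [StarMul R] {x : R} (hx : IsSelfAdjoint x) :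
    IsSelfAdjoint (x * x) := by
  rw [IsSelfAdjoint, star_mul, hx.star_eq]

/-- `b` is the inverse of `a` in the corner ring `p A p`; `a` itself need not lie in the corner. -/
def IsCornerInv {A : Type*} [Mul A] (p a b : A) : Prop :=
  b = p * b * p ∧ b * a = p ∧ a * b = p

namespace IsCornerInv

variable {A : Type*} [Ring A] {p a b c d : A}

theorem mul_left_eq (hp : IsIdempotentElem p) (h : IsCornerInv p a b) : p * b = b := by
  rw [h.1, ← mul_assoc, ← mul_assoc, hp.eq]

theorem mul_right_eq (hp : IsIdempotentElem p) (h : IsCornerInv p a b) : b * p = b := by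
  rw [h.1, mul_assoc, hp.eq]

theorem unique (hp : IsIdempotentElem p) (h : IsCornerInv p a b) (h' : IsCornerInv p a c) :
    b = c := by
  calc b = b * (a * c) := by rw [h'.2.2, h.mul_right_eq hp]
    _ = c := by rw [← mul_assoc, h.2.1, h'.mul_left_eq hp]

theorem mul (hp : IsIdempotentElem p) (h : IsCornerInv p a b) (h' : IsCornerInv p c d) :
    IsCornerInv p (a * c) (d * b) := by
  refine ⟨?_, ?_, ?_⟩
  · rw [← mul_assoc p d b, h'.mul_left_eq hp, mul_assoc, h.mul_right_eq hp]
  · rw [mul_assoc, ← mul_assoc b, h.2.1, ← mul_assoc, h'.mul_right_eq hp, h'.2.1]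
  · rw [mul_assoc, ← mul_assoc c, h'.2.2, ← mul_assoc, mul_assoc a, h.mul_left_eq hp, h.2.2]

theorem neg (h : IsCornerInv p a b) : IsCornerInv p (-a) (-b) := by
  refine ⟨?_, ?_, ?_⟩ <;> simp [← h.1, h.2.1, h.2.2]

theorem sub_eq_mul_sub_mul (hp : IsIdempotentElem p) (h : IsCornerInv p a b)
    (h' : IsCornerInv p c d) : b - d = b * (c - a) * d := by
  rw [mul_sub, sub_mul, mul_assoc, h'.2.2, h.mul_right_eq hp, h.2.1, h'.mul_left_eq hp]

theorem of_mul_self {y z : A} (hp : IsIdempotentElem p) (hz : z = p * z * p)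
    (h : IsCornerInv p y (z * z)) : IsCornerInv p z (y * z) := by
  have hpz : p * z = z := by rw [hz, ← mul_assoc, ← mul_assoc, hp.eq]
  have hzp : z * p = z := by rw [hz, mul_assoc, hp.eq]
  have hpy : p * y = y * p :=
    calc p * y = y * (z * z) * y := by rw [h.2.2]
      _ = y * p := by rw [mul_assoc, h.2.1]
  have hzy : z * y = y * z :=
    calc z * y = y * (z * z) * z * y := by rw [h.2.2, hpz]
      _ = y * z * (z * z * y) := by noncomm_ring
      _ = y * z := by rw [h.2.1, mul_assoc, hzp]
  refine ⟨?_, ?_, ?_⟩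
  · rw [← mul_assoc, hpy, mul_assoc y, hpz, mul_assoc, hzp]
  · rw [mul_assoc, h.2.2]
  · rw [← mul_assoc, hzy, mul_assoc, h.2.2]

theorem schur_complement_eq_mul (hp : IsIdempotentElem p) {u r : A}
    (hr : IsCornerInv (1 - p) ((1 - p) * u * (1 - p)) r) :
    p * u * p - p * u * (1 - p) * r * (1 - p) * u * p = u * (p - r * u * p) ∧
      p * u * p - p * u * (1 - p) * r * (1 - p) * u * p = (p - p * u * r) * u := by
  have hq := hp.one_sub
  have hqur : (1 - p) * u * r = 1 - p :=
    calc (1 - p) * u * r = (1 - p) * u * (1 - p) * r := by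
          rw [mul_assoc ((1 - p) * u) (1 - p) r, hr.mul_left_eq hq]
      _ = 1 - p := hr.2.2
  have hurq : r * u * (1 - p) = 1 - p :=
    calc r * u * (1 - p) = r * (1 - p) * u * (1 - p) := by rw [hr.mul_right_eq hq]
      _ = r * ((1 - p) * u * (1 - p)) := by noncomm_ring
      _ = 1 - p := hr.2.1
  have hS : p * u * (1 - p) * r * (1 - p) * u * p = p * u * r * u * p := by
    rw [show p * u * (1 - p) * r * (1 - p) * u * p = p * u * ((1 - p) * r * (1 - p)) * u * p by
      noncomm_ring, ← hr.1]
  rw [hS]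
  constructor
  · calc p * u * p - p * u * r * u * p
        = p * u * p - p * u * r * u * p + ((1 - p) * u * p - (1 - p) * u * r * u * p) := by
          rw [hqur, sub_self, add_zero]
      _ = u * (p - r * u * p) := by noncomm_ring
  · calc p * u * p - p * u * r * u * p
        = p * u * p - p * u * r * u * p + (p * u * (1 - p) - p * u * (r * u * (1 - p))) := by
          rw [hurq, sub_self, add_zero]
      _ = (p - p * u * r) * u := by noncomm_ring

theorem schur_complement (hp : IsIdempotentElem p) (u : Aˣ) {r : A}
    (hr : IsCornerInv (1 - p) ((1 - p) * u * (1 - p)) r) :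
    IsCornerInv p (p * u * p - p * u * (1 - p) * r * (1 - p) * u * p) (p * ↑u⁻¹ * p) := by
  obtain ⟨hSl, hSr⟩ := hr.schur_complement_eq_mul hp
  set S := p * u * p - p * u * (1 - p) * r * (1 - p) * u * p with hS
  have hpS : p * S = S := by simp only [hS, mul_sub, ← mul_assoc, hp.eq]
  have hSp : S * p = S := by simp only [hS, sub_mul, mul_assoc, hp.eq]
  have hpr : p * r = 0 := by
    rw [← hr.mul_left_eq hp.one_sub, ← mul_assoc, hp.mul_one_sub_self, zero_mul]
  have hrp : r * p = 0 := by
    rw [← hr.mul_right_eq hp.one_sub, mul_assoc, hp.one_sub_mul_self, mul_zero]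
  refine ⟨by rw [← mul_assoc, ← mul_assoc, hp.eq, mul_assoc _ p p, hp.eq], ?_, ?_⟩
  · calc p * ↑u⁻¹ * p * S = p * ↑u⁻¹ * (u * (p - r * u * p)) := by rw [mul_assoc _ p, hpS, hSl]
      _ = p * (p - r * u * p) := by rw [mul_assoc, ← mul_assoc (↑u⁻¹ : A) u, u.inv_mul, one_mul]
      _ = p := by
        rw [mul_sub, hp.eq, ← mul_assoc, ← mul_assoc, hpr, zero_mul, zero_mul, sub_zero]
  · calc S * (p * ↑u⁻¹ * p) = (p - p * u * r) * u * ↑u⁻¹ * p := by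
          rw [← mul_assoc, ← mul_assoc, hSp, hSr]
      _ = (p - p * u * r) * p := by rw [mul_assoc _ (u : A), u.mul_inv, mul_one]
      _ = p := by rw [sub_mul, hp.eq, mul_assoc, hrp, mul_zero, sub_zero]

theorem add_smul_one_sub {𝕜 : Type*} [Field 𝕜] [Algebra 𝕜 A] {x y : A}
    (hp : IsIdempotentElem p) (h : IsCornerInv p (p * x * p) y) {s : 𝕜} (hs : s ≠ 0) :
    (p * x * p + s • (1 - p)) * (y + s⁻¹ • (1 - p)) = 1 ∧
      (y + s⁻¹ • (1 - p)) * (p * x * p + s • (1 - p)) = 1 := by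
  have hpq := hp.mul_one_sub_self
  have hqp := hp.one_sub_mul_self
  have hqy : (1 - p) * y = 0 := by rw [← h.mul_left_eq hp, ← mul_assoc, hqp, zero_mul]
  have hyq : y * (1 - p) = 0 := by rw [← h.mul_right_eq hp, mul_assoc, hpq, mul_zero]
  have hxq : p * x * p * (1 - p) = 0 := by rw [mul_assoc, hpq, mul_zero]
  have hqx : (1 - p) * (p * x * p) = 0 := by
    rw [← mul_assoc, ← mul_assoc, hqp, zero_mul, zero_mul]
  constructor
  · simp only [add_mul, mul_add, smul_mul_assoc, mul_smul_comm, h.2.2, hxq, hqy,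
      hp.one_sub.eq, smul_zero, zero_add, add_zero]
    rw [smul_smul, inv_mul_cancel₀ hs, one_smul, add_sub_cancel]
  · simp only [add_mul, mul_add, smul_mul_assoc, mul_smul_comm, h.2.1, hqx, hyq,
      hp.one_sub.eq, smul_zero, zero_add, add_zero]
    rw [smul_smul, mul_inv_cancel₀ hs, one_smul, add_sub_cancel]

theorem star [StarRing A] (h : IsCornerInv p a b) :
    IsCornerInv (star p) (star a) (star b) := by
  refine ⟨?_, ?_, ?_⟩
  · rw [← star_mul, ← star_mul, ← mul_assoc, ← h.1]
  · rw [← star_mul, h.2.2]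
  · rw [← star_mul, h.2.1]

theorem isSelfAdjoint [StarRing A] (hp : IsStarProjection p) (ha : IsSelfAdjoint a)
    (h : IsCornerInv p a b) : IsSelfAdjoint b := by
  have := h.star
  rw [hp.isSelfAdjoint.star_eq, ha.star_eq] at this
  exact (h.unique hp.isIdempotentElem this).symm

theorem mul_self_of_mul_eq [StarRing A] {z : A} (hp : IsStarProjection p) (ha : IsSelfAdjoint a)
    (hz : IsSelfAdjoint z) (hzp : z = p * z * p) (h : z * z * a = p) : IsCornerInv p a (z * z) := by
  have hpz : p * z = z := by rw [hzp, ← mul_assoc, ← mul_assoc, hp.isIdempotentElem.eq]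
  have hzp' : z * p = z := by rw [hzp, mul_assoc, hp.isIdempotentElem.eq]
  refine ⟨by rw [← mul_assoc, hpz, mul_assoc, hzp'], h, ?_⟩
  simpa [ha.star_eq, hz.star_eq, hp.isSelfAdjoint.star_eq, mul_assoc] using congrArg Star.star h

end IsCornerInv

section Feshbach

variable {𝕜 A : Type*} [CommRing 𝕜] [Ring A] [Algebra 𝕜 A] {p q h r r₀ : A} {c : 𝕜}

theorem IsCornerInv.eq_add_smul_add_smul (hq : IsIdempotentElem q)
    (hc : IsCornerInv q (q * (h - c • 1) * q) r) (h₀ : IsCornerInv q (q * h * q) r₀) :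
    r = r₀ + c • (r₀ * r₀) + c ^ 2 • (r * (r₀ * r₀)) := by
  have hfirst : r = r₀ + c • (r * r₀) := by
    have hdiff : q * h * q - q * (h - c • 1) * q = c • q := by
      rw [mul_sub, sub_mul, mul_smul_comm, mul_one, smul_mul_assoc, hq.eq, sub_sub_cancel]
    have := hc.sub_eq_mul_sub_mul hq h₀
    rw [hdiff, mul_smul_comm, smul_mul_assoc, hc.mul_right_eq hq] at this
    rw [← this]; abel
  calc r = r₀ + c • ((r₀ + c • (r * r₀)) * r₀) := by rw [← hfirst, ← hfirst]
    _ = r₀ + c • (r₀ * r₀) + c ^ 2 • (r * (r₀ * r₀)) := by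
      rw [add_mul, smul_mul_assoc, smul_add, smul_smul, mul_assoc, sq, add_assoc]

theorem schur_complement_perturbed_eq (hp : IsIdempotentElem p)
    (h₀ : IsCornerInv (1 - p) ((1 - p) * h * (1 - p)) r₀)
    (hc : IsCornerInv (1 - p) ((1 - p) * (h - c • 1) * (1 - p)) r) {g : A}
    (hg : g = h - c • 1 + c ^ 2 • (p * h * (1 - p) * (r * (r₀ * r₀)) * (1 - p) * h * p)) :
    (1 - p) * g * (1 - p) = (1 - p) * (h - c • 1) * (1 - p) ∧
    p * g * p - p * g * (1 - p) * r * (1 - p) * g * p =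
      p * h * p - p * h * (1 - p) * r₀ * (1 - p) * h * p -
        c • (p + p * h * (1 - p) * (r₀ * r₀) * (1 - p) * h * p) := by
  have hexp := hc.eq_add_smul_add_smul hp.one_sub h₀
  set q := 1 - p with hq
  have hpq : p * q = 0 := hp.mul_one_sub_self
  have hqp : q * p = 0 := hp.one_sub_mul_self
  set E := p * h * q * (r * (r₀ * r₀)) * q * h * p with hE
  have hqE : q * E = 0 := by simp only [hE, ← mul_assoc, hqp, zero_mul]
  have hEq : E * q = 0 := by simp only [hE, mul_assoc, hpq, mul_zero]
  have hpEp : p * E * p = E := by simp only [hE, ← mul_assoc, hp.eq]; rw [mul_assoc _ p p, hp.eq]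
  subst hg
  refine ⟨?_, ?_⟩
  · simp only [mul_add, mul_smul_comm, hqE, smul_zero, add_zero]
  · have hpup : p * (h - c • 1 + c ^ 2 • E) * p = p * h * p - c • p + c ^ 2 • E := by
      simp only [add_mul, mul_add, sub_mul, mul_sub, mul_smul_comm, smul_mul_assoc, mul_one,
        hp.eq, hpEp]
    have hpuq : p * (h - c • 1 + c ^ 2 • E) * q = p * h * q := by
      simp only [add_mul, mul_add, sub_mul, mul_sub, mul_smul_comm, smul_mul_assoc, mul_one,
        hpq, mul_assoc p E q, hEq, mul_zero, smul_zero, sub_zero, add_zero]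
    have hqup : q * (h - c • 1 + c ^ 2 • E) * p = q * h * p := by
      simp only [mul_add, sub_mul, mul_sub, mul_smul_comm, smul_mul_assoc, mul_one, hqp, hqE,
        smul_zero, sub_zero, add_zero]
    have hmid : p * (h - c • 1 + c ^ 2 • E) * q * r * q * (h - c • 1 + c ^ 2 • E) * p =
        p * h * q * r₀ * q * h * p + c • (p * h * q * (r₀ * r₀) * q * h * p) + c ^ 2 • E :=
      calc _ = p * (h - c • 1 + c ^ 2 • E) * q * r * (q * (h - c • 1 + c ^ 2 • E) * p) := by
            simp only [mul_assoc]
        _ = p * h * q * (r₀ + c • (r₀ * r₀) + c ^ 2 • (r * (r₀ * r₀))) * (q * h * p) := by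
            rw [hpuq, hqup, ← hexp]
        _ = _ := by simp only [hE, mul_add, add_mul, mul_smul_comm, smul_mul_assoc, mul_assoc]
    rw [hpup, hmid]
    module

theorem exists_isCornerInv_dressed_sub_smul (hp : IsIdempotentElem p)
    (h₀ : IsCornerInv (1 - p) ((1 - p) * h * (1 - p)) r₀)
    (hc : IsCornerInv (1 - p) ((1 - p) * (h - c • 1) * (1 - p)) r) {z : A} (hz : z = p * z * p)
    (hy : IsCornerInv p (p + p * h * (1 - p) * (r₀ * r₀) * (1 - p) * h * p) (z * z))
    (hu : IsUnit (h - c • 1 + c ^ 2 • (p * h * (1 - p) * (r * (r₀ * r₀)) * (1 - p) * h * p))) :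
    ∃ w, IsCornerInv p
      (z * (p * h * p - p * h * (1 - p) * r₀ * (1 - p) * h * p) * z - c • p) w := by
  obtain ⟨u, hu⟩ := hu
  obtain ⟨hqu, hS⟩ := schur_complement_perturbed_eq hp h₀ hc hu
  have hsch := IsCornerInv.schur_complement hp u (hqu ▸ hc)
  rw [hS] at hsch
  have hz' := hy.of_mul_self hp hz
  set n := p * h * p - p * h * (1 - p) * r₀ * (1 - p) * h * p
  set y := p + p * h * (1 - p) * (r₀ * r₀) * (1 - p) * h * p
  have hdressed : z * (n - c • y) * z = z * n * z - c • p := by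
    rw [mul_sub, sub_mul, mul_smul_comm, smul_mul_assoc, mul_assoc z y z, hz'.2.2]
  exact ⟨_, hdressed ▸ (hz'.mul hp hsch).mul hp hz'⟩

end Feshbach

section CStarAlgebra

variable {A : Type*} [CStarAlgebra A]

theorem IsStarNormal.norm_inv_le (u : Aˣ) [IsStarNormal (u : A)] {c : ℝ} (hc : 0 < c)
    (h : ∀ z ∈ spectrum ℂ (u : A), c ≤ ‖z‖) : ‖(↑u⁻¹ : A)‖ ≤ c⁻¹ := by
  have hρ : spectralRadius ℂ (↑u⁻¹ : A) ≤ c⁻¹.toNNReal := by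
    refine iSup₂_le fun z hz => ENNReal.coe_le_coe.mpr ?_
    have hcz : c ≤ ‖z‖⁻¹ := by simpa using h _ (spectrum.inv₀_mem_iff.mpr hz)
    rw [← NNReal.coe_le_coe, coe_nnnorm, Real.coe_toNNReal _ (by positivity)]
    rcases eq_or_ne z 0 with rfl | hz0
    · simp [hc.le]
    · exact le_inv_of_le_inv₀ hc hcz
  rw [IsStarNormal.spectralRadius_eq_nnnorm] at hρ
  simpa [hc.le] using NNReal.coe_le_coe.mpr (ENNReal.coe_le_coe.mp hρ)

instance IsStarNormal.algebraMap_sub (z : ℂ) (a : A) [IsStarNormal a] :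
    IsStarNormal (algebraMap ℂ A z - a) where
  star_comm_self := by
    rw [star_sub, ← algebraMap_star_comm]
    exact ((Algebra.commute_algebraMap_left _ _).sub_right
      (Algebra.commute_algebraMap_left _ _)).sub_left
      ((Algebra.commute_algebraMap_right _ _).sub_right IsStarNormal.star_comm_self)

theorem IsStarNormal.infDist_spectrum_le {a : A} [IsStarNormal a] (b : A) {z : ℂ}
    (hz : z ∈ spectrum ℂ (a + b)) : infDist z (spectrum ℂ a) ≤ ‖b‖ := by
  rcases subsingleton_or_nontrivial A with hA | hA
  · simp [spectrum.of_subsingleton] at hz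
  by_contra! hlt
  have hc : 0 < infDist z (spectrum ℂ a) := (norm_nonneg b).trans_lt hlt
  obtain ⟨u, hu⟩ : IsUnit (algebraMap ℂ A z - a) := by
    by_contra hna
    exact hc.ne' (infDist_zero_of_mem (spectrum.mem_iff.mpr hna))
  have hsep : ∀ w ∈ spectrum ℂ (u : A), infDist z (spectrum ℂ a) ≤ ‖w‖ := by
    intro w hw
    rw [hu, ← spectrum.singleton_sub_eq] at hw
    obtain ⟨_, rfl, y, hy, rfl⟩ := hw
    simpa [dist_eq_norm] using infDist_le_dist_of_mem hy
  have : IsStarNormal (u : A) := hu ▸ inferInstance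
  have hinv := IsStarNormal.norm_inv_le u hc hsep
  have hb : ‖-b‖ < ‖(↑u⁻¹ : A)‖⁻¹ := by
    rw [norm_neg]
    exact hlt.trans_le (le_inv_of_le_inv₀ (Units.norm_pos _) hinv)
  apply spectrum.mem_iff.mp hz
  convert (u.add (-b) hb).isUnit using 1
  rw [Units.val_add, hu]; abel

theorem IsSelfAdjoint.norm_inv_le (u : Aˣ) (hu : IsSelfAdjoint (u : A)) {c : ℝ} (hc : 0 < c)
    (h : ∀ t : ℝ, |t| < c → IsUnit ((u : A) - (t : ℂ) • 1)) : ‖(↑u⁻¹ : A)‖ ≤ c⁻¹ := by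
  have := hu.isStarNormal
  refine IsStarNormal.norm_inv_le u hc fun z hz => ?_
  by_contra! hlt
  rw [hu.mem_spectrum_eq_re hz, Complex.norm_real, Real.norm_eq_abs] at hlt
  apply spectrum.mem_iff.mp hz
  rw [hu.mem_spectrum_eq_re hz, Algebra.algebraMap_eq_smul_one, ← neg_sub]
  exact (h _ hlt).neg

theorem norm_le_inv_of_isCornerInv {q h : A} (hq : IsStarProjection q) (hh : IsSelfAdjoint h)
    {R : ℝ → A} {f c : ℝ} (hc : 0 < c)
    (hR : ∀ t ∈ Set.Ioo (f - c) (f + c), IsCornerInv q (q * (h - (t : ℂ) • 1) * q) (R t)) :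
    ‖R f‖ ≤ c⁻¹ := by
  set a := q * (h - (f : ℂ) • 1) * q + (c : ℂ) • (1 - q) with ha
  have hshift (t : ℝ) : a - (t : ℂ) • 1 =
      q * (h - ((f + t : ℝ) : ℂ) • 1) * q + ((c - t : ℝ) : ℂ) • (1 - q) := by
    simp only [ha, mul_sub, sub_mul, mul_smul_comm, smul_mul_assoc, mul_one, hq.isIdempotentElem.eq]
    push_cast
    module
  have hinv (t : ℝ) (ht : |t| < c) :
      (a - (t : ℂ) • 1) * (R (f + t) + ((c - t : ℝ) : ℂ)⁻¹ • (1 - q)) = 1 ∧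
      (R (f + t) + ((c - t : ℝ) : ℂ)⁻¹ • (1 - q)) * (a - (t : ℂ) • 1) = 1 := by
    rw [abs_lt] at ht
    rw [hshift]
    exact (hR (f + t) ⟨by linarith, by linarith⟩).add_smul_one_sub hq.isIdempotentElem
      (by exact_mod_cast (sub_pos.mpr ht.2).ne')
  have hsa : IsSelfAdjoint a := by
    simp [ha, IsSelfAdjoint, star_sub, mul_assoc, hq.isSelfAdjoint.star_eq, hh.star_eq]
  obtain ⟨h₁, h₂⟩ := hinv 0 (by simpa using hc)
  simp only [Complex.ofReal_zero, zero_smul, sub_zero, add_zero] at h₁ h₂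
  have hnorm := IsSelfAdjoint.norm_inv_le (Units.mk _ _ h₁ h₂) hsa hc fun t ht =>
    (Units.mk _ _ (hinv t ht).1 (hinv t ht).2).isUnit
  have hRf : R f = q * (R f + (c : ℂ)⁻¹ • (1 - q)) * q := by
    rw [mul_add, add_mul, mul_smul_comm, smul_mul_assoc, hq.mul_one_sub_self, zero_mul,
      smul_zero, add_zero]
    exact (hR f ⟨by linarith, by linarith⟩).1
  calc ‖R f‖ = ‖q * (R f + (c : ℂ)⁻¹ • (1 - q)) * q‖ := congrArg norm hRf
    _ ≤ ‖q‖ * ‖R f + (c : ℂ)⁻¹ • (1 - q)‖ * ‖q‖ := norm_mul₃_le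
    _ ≤ 1 * c⁻¹ * 1 := by
        gcongr
        · exact hq.norm_le
        · exact hnorm
        · exact hq.norm_le
    _ = c⁻¹ := by ring

theorem isSelfAdjoint_sandwich {p q h x : A} (hp : IsSelfAdjoint p) (hq : IsSelfAdjoint q)
    (hh : IsSelfAdjoint h) (hx : IsSelfAdjoint x) : IsSelfAdjoint (p * h * q * x * q * h * p) := by
  have := hx.conjugate (p * h * q)
  rwa [star_mul, star_mul, hp.star_eq, hq.star_eq, hh.star_eq, ← mul_assoc, ← mul_assoc] at this

theorem norm_sandwich_le {p h x : A} (hp : IsStarProjection p) (hh : IsSelfAdjoint h) :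
    ‖p * h * (1 - p) * x * (1 - p) * h * p‖ ≤ ‖h * p‖ ^ 2 * ‖x‖ := by
  have hqhp : ‖(1 - p) * h * p‖ ≤ ‖h * p‖ := by
    rw [mul_assoc]
    exact (norm_mul_le _ _).trans (mul_le_of_le_one_left (norm_nonneg _) hp.one_sub.norm_le)
  have hphq : ‖p * h * (1 - p)‖ = ‖(1 - p) * h * p‖ := by
    rw [← norm_star, star_mul, star_mul, hp.isSelfAdjoint.star_eq, hh.star_eq,
      hp.one_sub.isSelfAdjoint.star_eq, mul_assoc]
  calc ‖p * h * (1 - p) * x * (1 - p) * h * p‖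
      = ‖p * h * (1 - p) * x * ((1 - p) * h * p)‖ := by simp only [mul_assoc]
    _ ≤ ‖p * h * (1 - p)‖ * ‖x‖ * ‖(1 - p) * h * p‖ := norm_mul₃_le
    _ ≤ ‖h * p‖ * ‖x‖ * ‖h * p‖ := by rw [hphq]; gcongr
    _ = ‖h * p‖ ^ 2 * ‖x‖ := by ring

theorem norm_perturbation_le {p h r r₀ : A} (hp : IsStarProjection p) (hh : IsSelfAdjoint h)
    {c L m d : ℝ} (hc : |c| ≤ L) (hr : ‖r‖ ≤ d⁻¹) (hr₀ : ‖r₀‖ ≤ m⁻¹) :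
    ‖(c : ℂ) ^ 2 • (p * h * (1 - p) * (r * (r₀ * r₀)) * (1 - p) * h * p)‖ ≤
      ‖h * p‖ ^ 2 * (L / m) ^ 2 * (1 / d) := by
  have hrr : ‖r * (r₀ * r₀)‖ ≤ d⁻¹ * (m⁻¹ * m⁻¹) :=
    (norm_mul_le _ _).trans <| by
      gcongr
      · exact (norm_nonneg _).trans hr
      · exact (norm_mul_le _ _).trans (by gcongr; exact (norm_nonneg _).trans hr₀)
  calc ‖(c : ℂ) ^ 2 • (p * h * (1 - p) * (r * (r₀ * r₀)) * (1 - p) * h * p)‖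
      ≤ |c| ^ 2 * (‖h * p‖ ^ 2 * ‖r * (r₀ * r₀)‖) := by
        rw [norm_smul, norm_pow, Complex.norm_real, Real.norm_eq_abs]
        gcongr
        exact norm_sandwich_le hp hh
    _ ≤ L ^ 2 * (‖h * p‖ ^ 2 * (d⁻¹ * (m⁻¹ * m⁻¹))) := by gcongr
    _ = ‖h * p‖ ^ 2 * (L / m) ^ 2 * (1 / d) := by ring

end CStarAlgebra

section Compression

variable {𝕜 E : Type*} [NontriviallyNormedField 𝕜] [NormedAddCommGroup E] [NormedSpace 𝕜 E]
  {P : E →L[𝕜] E} {K : Submodule 𝕜 E}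

theorem isUnit_of_isCornerInv (hK : ∀ x : E, x ∈ K ↔ P x = x) (hP : IsIdempotentElem P)
    {a b : E →L[𝕜] E} (h : IsCornerInv P a b) {T : K →L[𝕜] K}
    (hT : ∀ x : K, (T x : E) = a x) : IsUnit T := by
  have hfix (x : K) : P x = x := (hK x).mp x.2
  have hb (x : K) : b x ∈ K := by
    rw [hK, ← mul_apply_eq_comp, h.mul_left_eq hP]
  refine ⟨⟨T, (b.comp K.subtypeL).codRestrict K hb, ?_, ?_⟩, rfl⟩ <;> ext x
  · rw [mul_apply_eq_comp, hT]
    change (a * b) x = x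
    rw [h.2.2, hfix]
  · change b (T x) = x
    rw [hT]
    change (b * a) x = x
    rw [h.2.1, hfix]

theorem mem_spectrum_add_of_mem_spectrum_dressed (hK : ∀ x : E, x ∈ K ↔ P x = x)
    (hP : IsIdempotentElem P) {H Z r r₀ : E →L[𝕜] E}
    (h₀ : IsCornerInv (1 - P) ((1 - P) * H * (1 - P)) r₀) {c : 𝕜}
    (hc : IsCornerInv (1 - P) ((1 - P) * (H - c • 1) * (1 - P)) r) (hZ : Z = P * Z * P)
    (hY : IsCornerInv P (P + P * H * (1 - P) * (r₀ * r₀) * (1 - P) * H * P) (Z * Z))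
    {Ht : K →L[𝕜] K}
    (hHt : ∀ x : K, (Ht x : E) = (Z * (P * H * P - P * H * (1 - P) * r₀ * (1 - P) * H * P) * Z) x)
    (hspec : c ∈ spectrum 𝕜 Ht) :
    c ∈ spectrum 𝕜 (H + c ^ 2 • (P * H * (1 - P) * (r * (r₀ * r₀)) * (1 - P) * H * P)) := by
  rw [spectrum.mem_iff]
  intro hunit
  have hG : IsUnit (H - c • 1 + c ^ 2 • (P * H * (1 - P) * (r * (r₀ * r₀)) * (1 - P) * H * P)) := by
    convert hunit.neg using 1
    rw [Algebra.algebraMap_eq_smul_one]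
    abel
  obtain ⟨w, hw⟩ := exists_isCornerInv_dressed_sub_smul hP h₀ hc hZ hY hG
  refine spectrum.mem_iff.mp hspec (isUnit_of_isCornerInv hK hP hw.neg fun x => ?_)
  simp [Algebra.algebraMap_eq_smul_one, hHt, (hK x).mp x.2]

end Compression

theorem stmt10_general {𝓗 : Type*} [NormedAddCommGroup 𝓗] [InnerProductSpace ℂ 𝓗] [CompleteSpace 𝓗]
    (H P : 𝓗 →L[ℂ] 𝓗) (hH : IsSelfAdjoint H)
    (hP : IsSelfAdjoint P) (hP2 : P * P = P)
    (K : Submodule ℂ 𝓗) (hK : ∀ x : 𝓗, x ∈ K ↔ P x = x)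
    (Λm Λp : ℝ) (hΛm : 0 < Λm) (hΛp : 0 < Λp)
    (R : ℝ → 𝓗 →L[ℂ] 𝓗)
    (hadm : ∀ e ∈ Set.Ioo (-Λm) Λp,
      R e = (1 - P) * R e * (1 - P) ∧
      R e * ((1 - P) * (H - (e : ℂ) • 1) * (1 - P)) = 1 - P ∧
      ((1 - P) * (H - (e : ℂ) • 1) * (1 - P)) * R e = 1 - P)
    (Z : 𝓗 →L[ℂ] 𝓗) (hZpos : Z.IsPositive) (hZsupp : Z = P * Z * P)
    (hZsq : Z * Z * (P + P * H * (1 - P) * (R 0 * R 0) * (1 - P) * H * P) = P)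
    (Ht : K →L[ℂ] K)
    (hHt : ∀ x : K, (Ht x : 𝓗) =
      (Z * (P * H * P - P * H * (1 - P) * R 0 * (1 - P) * H * P) * Z) (x : 𝓗))
    (a b : ℝ)
    (hsub : -Λm < a) (hsub' : b < Λp) :
    ∀ e ∈ Set.Icc a b, (e : ℂ) ∈ spectrum ℂ Ht →
      Metric.infDist ((e : ℝ) : ℂ) (spectrum ℂ H) ≤
        ‖H * P‖ ^ 2 * (max (-a) b / min Λm Λp) ^ 2 * (1 / min (a + Λm) (Λp - b)) := by
  intro e he hspec
  have hPproj : IsStarProjection P := ⟨hP2, hP⟩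
  have hQ := hPproj.one_sub
  have hR₀ : ‖R 0‖ ≤ (min Λm Λp)⁻¹ :=
    norm_le_inv_of_isCornerInv hQ hH (lt_min hΛm hΛp) fun t ht =>
      hadm t ⟨by linarith [ht.1, min_le_left Λm Λp], by linarith [ht.2, min_le_right Λm Λp]⟩
  have hRe : ‖R e‖ ≤ (min (a + Λm) (Λp - b))⁻¹ :=
    norm_le_inv_of_isCornerInv hQ hH (lt_min (by linarith) (by linarith)) fun t ht =>
      hadm t ⟨by linarith [ht.1, he.1, min_le_left (a + Λm) (Λp - b)],
        by linarith [ht.2, he.2, min_le_right (a + Λm) (Λp - b)]⟩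
  have h₀ : IsCornerInv (1 - P) ((1 - P) * H * (1 - P)) (R 0) := by
    have h := hadm 0 ⟨neg_neg_of_pos hΛm, hΛp⟩
    simp only [Complex.ofReal_zero, zero_smul, sub_zero] at h
    exact h
  have hR₀sa : IsSelfAdjoint (R 0) :=
    h₀.isSelfAdjoint hQ (by simpa [hQ.isSelfAdjoint.star_eq] using hH.conjugate (1 - P))
  have hY := IsCornerInv.mul_self_of_mul_eq hPproj
    (hP.add (isSelfAdjoint_sandwich hP hQ.isSelfAdjoint hH hR₀sa.mul_self))
    hZpos.isSelfAdjoint hZsupp hZsq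
  have hmem := mem_spectrum_add_of_mem_spectrum_dressed hK hP2 h₀
    (hadm e ⟨by linarith [he.1], by linarith [he.2]⟩) hZsupp hY hHt hspec
  have := hH.isStarNormal
  calc Metric.infDist ((e : ℝ) : ℂ) (spectrum ℂ H) ≤ ‖_‖ := IsStarNormal.infDist_spectrum_le _ hmem
    _ ≤ _ := norm_perturbation_le hPproj hH
      (abs_le.mpr ⟨by linarith [he.1, le_max_left (-a) b], he.2.trans (le_max_right _ _)⟩) hRe hR₀

theorem stmt10 {𝓗 : Type*} [NormedAddCommGroup 𝓗] [InnerProductSpace ℂ 𝓗] [CompleteSpace 𝓗]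
    (H P : 𝓗 →L[ℂ] 𝓗) (hH : IsSelfAdjoint H)
    (hP : IsSelfAdjoint P) (hP2 : P * P = P)
    (K : Submodule ℂ 𝓗) (hK : ∀ x : 𝓗, x ∈ K ↔ P x = x)
    (Λm Λp : ℝ) (hΛm : 0 < Λm) (hΛp : 0 < Λp)
    (R : ℝ → 𝓗 →L[ℂ] 𝓗)
    (hadm : ∀ e ∈ Set.Ioo (-Λm) Λp,
      R e = (1 - P) * R e * (1 - P) ∧
      R e * ((1 - P) * (H - (e : ℂ) • 1) * (1 - P)) = 1 - P ∧
      ((1 - P) * (H - (e : ℂ) • 1) * (1 - P)) * R e = 1 - P)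
    (Z : 𝓗 →L[ℂ] 𝓗) (hZpos : Z.IsPositive) (hZsupp : Z = P * Z * P)
    (hZsq : Z * Z * (P + P * H * (1 - P) * (R 0 * R 0) * (1 - P) * H * P) = P)
    (Ht : K →L[ℂ] K)
    (hHt : ∀ x : K, (Ht x : 𝓗) =
      (Z * (P * H * P - P * H * (1 - P) * R 0 * (1 - P) * H * P) * Z) (x : 𝓗))
    (a b : ℝ) (ha : a < 0) (hb : 0 < b)
    (hsub : -Λm < a) (hsub' : b < Λp) :
    ∀ e ∈ Set.Icc a b, (e : ℂ) ∈ spectrum ℂ Ht →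
      Metric.infDist ((e : ℝ) : ℂ) (spectrum ℂ H) ≤
        ‖H * P‖ ^ 2 * (max (-a) b / min Λm Λp) ^ 2 * (1 / min (a + Λm) (Λp - b)) :=
  stmt10_general H P hH hP hP2 K hK Λm Λp hΛm hΛp R hadm Z hZpos hZsupp hZsq Ht hHt a b hsub hsub'
end

section
/- (Stokes' formula for triangles) For all x, y, z ∈ ℝ²: ∫_{⟨x,y,z⟩}B = ∫_{[x,y]}A + ∫_{[y,z]}A + ∫_{[z,x]}A; i.e. the flux of the magnetic field B = dA through the oriented triangle ⟨x,y,z⟩ equals the circulation of A along its oriented boundary. -/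
open MeasureTheory

/-- The `j`-th component of a vector in `ℝ × ℝ` (`j ∈ {0, 1}` standing for `{1, 2}`). -/
noncomputable def comp2 (j : Fin 2) (v : ℝ × ℝ) : ℝ := if j = 0 then v.1 else v.2

/-- The `j`-th partial derivative of `f : ℝ × ℝ → ℝ` at `p`. -/
noncomputable def pderiv2 (j : Fin 2) (f : ℝ × ℝ → ℝ) (p : ℝ × ℝ) : ℝ :=
  fderiv ℝ f p (if j = 0 then ((1 : ℝ), (0 : ℝ)) else ((0 : ℝ), (1 : ℝ)))

/-- The circulation `∫_{[x,y]} A := Σ_j (y_j − x_j) ∫₀¹ A_j (x + t(y − x)) dt` of a vector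
potential `A` along the oriented segment `[x, y]`. -/
noncomputable def circulation (A : ℝ × ℝ → ℝ × ℝ) (x y : ℝ × ℝ) : ℝ :=
  ∑ j : Fin 2, (comp2 j y - comp2 j x) * ∫ t in (0:ℝ)..1, comp2 j (A (x + t • (y - x)))

/-- The magnetic field `B_{jk} := ∂_j A_k − ∂_k A_j` associated to the vector potential `A`. -/
noncomputable def fieldB (A : ℝ × ℝ → ℝ × ℝ) (j k : Fin 2) (p : ℝ × ℝ) : ℝ :=
  pderiv2 j (fun q => comp2 k (A q)) p - pderiv2 k (fun q => comp2 j (A q)) p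

/-- The flux `∫_{⟨x,y,z⟩} B := Σ_{j,k} (y_j − x_j)(z_k − x_k) ∫₀¹ ∫₀^t B_{jk}(x + t(y−x) + s(z−y)) ds dt`
of the magnetic field `B = dA` through the oriented triangle `⟨x, y, z⟩`. -/
noncomputable def flux (A : ℝ × ℝ → ℝ × ℝ) (x y z : ℝ × ℝ) : ℝ :=
  ∑ j : Fin 2, ∑ k : Fin 2, (comp2 j y - comp2 j x) * (comp2 k z - comp2 k x) *
    ∫ t in (0:ℝ)..1, ∫ s in (0:ℝ)..t, fieldB A j k (x + t • (y - x) + s • (z - y))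

/-!
The map `(t, σ) ↦ x + t • ((y - x) + σ • (z - y))` sends the unit square onto the triangle
`⟨x, y, z⟩`, collapsing the side `t = 0` to the vertex `x`. The substitution `s = t σ` turns the
flux into the integral over the square of the pulled-back 2-form, and Green's theorem on the square
(`integral2_divergence_prod_of_hasFDerivAt`) turns that into boundary terms: the sides `σ = 0`,
`t = 1` and `σ = 1` run along the three edges of the triangle, while the collapsed side contributes
nothing. This works for any `C¹` 1-form `α` on a real normed space; for `ℝ²` one takes
`α p = ⟨A p, ·⟩`, whose exterior derivative is `det(u, v) • B₁₂`.
-/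

section Plane

variable {G : Type*} [NormedAddCommGroup G] [NormedSpace ℝ G]

theorem HasFDerivAt.apply_one_zero_eq {F : ℝ × ℝ → G} {F' : ℝ × ℝ →L[ℝ] G} {a b : ℝ} {c : G}
    (hF : HasFDerivAt F F' (a, b)) (hc : HasDerivAt (fun t => F (t, b)) c a) : F' (1, 0) = c :=
  (hF.comp_hasDerivAt a ((hasDerivAt_id a).prodMk (hasDerivAt_const a b))).unique hc

theorem HasFDerivAt.apply_zero_one_eq {F : ℝ × ℝ → G} {F' : ℝ × ℝ →L[ℝ] G} {a b : ℝ} {c : G}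
    (hF : HasFDerivAt F F' (a, b)) (hc : HasDerivAt (fun s => F (a, s)) c b) : F' (0, 1) = c :=
  (hF.comp_hasDerivAt b ((hasDerivAt_const b a).prodMk (hasDerivAt_id b))).unique hc

end Plane

section OneForm

variable {E : Type*} [NormedAddCommGroup E] [NormedSpace ℝ E] {α : E → E →L[ℝ] ℝ}

noncomputable def oneFormExtDeriv (α : E → E →L[ℝ] ℝ) (p u v : E) : ℝ :=
  fderiv ℝ α p u v - fderiv ℝ α p v u

-- If `a dt + b dσ` is the pullback of `α` along `(t, σ) ↦ x + t • (u + σ • v)`, the two functions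
-- are `b` and `-a`, so the left side is the curl `∂_t b - ∂_σ a`.
theorem divergence_pullback_eq_mul_oneFormExtDeriv (hα : Differentiable ℝ α) (x u v : E)
    (t σ : ℝ) :
    fderiv ℝ (fun p : ℝ × ℝ => p.1 * α (x + p.1 • (u + p.2 • v)) v) (t, σ) (1, 0) +
        fderiv ℝ (fun p : ℝ × ℝ => -α (x + p.1 • (u + p.2 • v)) (u + p.2 • v)) (t, σ) (0, 1) =
      t * oneFormExtDeriv α (x + t • (u + σ • v)) u v := by
  set w := u + σ • v
  have hline : HasDerivAt (fun r : ℝ => x + r • w) w t := by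
    simpa using ((hasDerivAt_id t).smul_const w).const_add x
  have hdt : HasDerivAt (fun t => t * α (x + t • w) v)
      (1 * α (x + t • w) v + t * fderiv ℝ α (x + t • w) w v) t := by
    have := ((hα _).hasFDerivAt.comp_hasDerivAt t hline).clm_apply (hasDerivAt_const t v)
    exact ((hasDerivAt_id' t).mul this).congr_deriv (by simp)
  have hdσ : HasDerivAt (fun σ => -α (x + t • (u + σ • v)) (u + σ • v))
      (-(fderiv ℝ α (x + t • w) (t • v) w + α (x + t • w) v)) σ := by
    have hw : HasDerivAt (fun s : ℝ => u + s • v) v σ := by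
      simpa using ((hasDerivAt_id σ).smul_const v).const_add u
    exact (((hα _).hasFDerivAt.comp_hasDerivAt σ ((hw.const_smul t).const_add x)).clm_apply hw).neg
  rw [(DifferentiableAt.hasFDerivAt (by fun_prop)).apply_one_zero_eq hdt,
    (DifferentiableAt.hasFDerivAt (by fun_prop)).apply_zero_one_eq hdσ]
  simp only [oneFormExtDeriv, w, map_add, map_smul, add_apply, smul_apply, smul_eq_mul]
  ring

theorem integral_unitSquare_oneFormExtDeriv (hα : ContDiff ℝ 1 α) (x u v : E) :
    (∫ t in (0:ℝ)..1, ∫ σ in (0:ℝ)..1,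
        t * oneFormExtDeriv α (x + t • (u + σ • v)) u v) =
      (∫ t in (0:ℝ)..1, α (x + t • u) u) + (∫ σ in (0:ℝ)..1, α (x + u + σ • v) v) -
        ∫ t in (0:ℝ)..1, α (x + t • (u + v)) (u + v) := by
  set f : ℝ × ℝ → ℝ := fun p => p.1 * α (x + p.1 • (u + p.2 • v)) v
  set g : ℝ × ℝ → ℝ := fun p => -α (x + p.1 • (u + p.2 • v)) (u + p.2 • v)
  have hf : ContDiff ℝ 1 f := by fun_prop
  have hg : ContDiff ℝ 1 g := by fun_prop
  have hdiv : Continuous fun p => fderiv ℝ f p (1, 0) + fderiv ℝ g p (0, 1) :=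
    ((hf.continuous_fderiv one_ne_zero).clm_apply continuous_const).add
      ((hg.continuous_fderiv one_ne_zero).clm_apply continuous_const)
  have green := integral2_divergence_prod_of_hasFDerivAt f g (fderiv ℝ f) (fderiv ℝ g) 0 0 1 1
    hf.continuous.continuousOn hg.continuous.continuousOn
    (fun p _ => (hf.differentiable one_ne_zero p).hasFDerivAt)
    (fun p _ => (hg.differentiable one_ne_zero p).hasFDerivAt)
    (hdiv.continuousOn.integrableOn_compact (isCompact_uIcc.prod isCompact_uIcc))
  simp only [f, g, divergence_pullback_eq_mul_oneFormExtDeriv (hα.differentiable one_ne_zero)]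
    at green
  rw [green]
  simp only [one_smul, zero_smul, add_zero, one_mul, zero_mul, add_assoc,
    intervalIntegral.integral_neg, intervalIntegral.integral_zero, sub_zero]
  ring

noncomputable def segmentIntegral (α : E → E →L[ℝ] ℝ) (x y : E) : ℝ :=
  ∫ t in (0:ℝ)..1, α (x + t • (y - x)) (y - x)

theorem segmentIntegral_swap (α : E → E →L[ℝ] ℝ) (x y : E) :
    segmentIntegral α y x = -segmentIntegral α x y := by
  set φ : ℝ → ℝ := fun t => α (x + t • (y - x)) (y - x)
  calc segmentIntegral α y x = ∫ t in (0:ℝ)..1, -φ (1 - t) := by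
        refine intervalIntegral.integral_congr fun t _ => ?_
        rw [show y + t • (x - y) = x + (1 - t) • (y - x) by module, ← neg_sub y x, map_neg]
    _ = -segmentIntegral α x y := by
        rw [intervalIntegral.integral_comp_sub_left (fun t => -φ t) 1, sub_self, sub_zero,
          intervalIntegral.integral_neg]
        rfl

theorem integral_triangle_eq_sum_segmentIntegral (hα : ContDiff ℝ 1 α) (x y z : E) :
    (∫ t in (0:ℝ)..1, ∫ s in (0:ℝ)..t,
        oneFormExtDeriv α (x + t • (y - x) + s • (z - y)) (y - x) (z - y)) =
      segmentIntegral α x y + segmentIntegral α y z + segmentIntegral α z x := by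
  have hrescale : ∀ t : ℝ, (∫ s in (0:ℝ)..t,
        oneFormExtDeriv α (x + t • (y - x) + s • (z - y)) (y - x) (z - y)) =
      ∫ σ in (0:ℝ)..1, t * oneFormExtDeriv α (x + t • (y - x + σ • (z - y))) (y - x) (z - y) := by
    intro t
    have h := intervalIntegral.smul_integral_comp_mul_left (a := 0) (b := 1)
      (fun s => oneFormExtDeriv α (x + t • (y - x) + s • (z - y)) (y - x) (z - y)) t
    simp only [mul_zero, mul_one, smul_eq_mul, mul_smul] at h
    rw [intervalIntegral.integral_const_mul, ← h]
    simp only [smul_add, add_assoc]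
  simp_rw [hrescale]
  rw [integral_unitSquare_oneFormExtDeriv hα, segmentIntegral_swap α x z,
    show y - x + (z - y) = z - x by abel]
  simp only [segmentIntegral, add_sub_cancel]
  ring

end OneForm

noncomputable def dotCLM : ℝ × ℝ →L[ℝ] ℝ × ℝ →L[ℝ] ℝ :=
  (ContinuousLinearMap.fst ℝ ℝ ℝ).smulRight (ContinuousLinearMap.fst ℝ ℝ ℝ) +
    (ContinuousLinearMap.snd ℝ ℝ ℝ).smulRight (ContinuousLinearMap.snd ℝ ℝ ℝ)

@[simp]
theorem dotCLM_apply_apply (w v : ℝ × ℝ) : dotCLM w v = w.1 * v.1 + w.2 * v.2 := by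
  simp [dotCLM]

theorem circulation_eq_segmentIntegral {A : ℝ × ℝ → ℝ × ℝ} (hA : Continuous A) (x y : ℝ × ℝ) :
    circulation A x y = segmentIntegral (fun p => dotCLM (A p)) x y := by
  simp only [circulation, segmentIntegral, Fin.sum_univ_two, dotCLM_apply_apply]
  rw [intervalIntegral.integral_add (Continuous.intervalIntegrable (by fun_prop) 0 1)
    (Continuous.intervalIntegrable (by fun_prop) 0 1), intervalIntegral.integral_mul_const,
    intervalIntegral.integral_mul_const]
  simp only [comp2, Fin.isValue, if_true, one_ne_zero, if_false, Prod.fst_sub, Prod.snd_sub]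
  ring

theorem fieldB_self (A : ℝ × ℝ → ℝ × ℝ) (j : Fin 2) (p : ℝ × ℝ) : fieldB A j j p = 0 :=
  sub_self _

theorem fieldB_swap (A : ℝ × ℝ → ℝ × ℝ) (j k : Fin 2) (p : ℝ × ℝ) :
    fieldB A k j p = -fieldB A j k p :=
  (neg_sub _ _).symm

theorem flux_eq_integral_det_mul_fieldB (A : ℝ × ℝ → ℝ × ℝ) (x y z : ℝ × ℝ) :
    flux A x y z = ∫ t in (0:ℝ)..1, ∫ s in (0:ℝ)..t,
      ((y - x).1 * (z - y).2 - (y - x).2 * (z - y).1) *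
        fieldB A 0 1 (x + t • (y - x) + s • (z - y)) := by
  simp only [flux, Fin.sum_univ_two, fieldB_self, fieldB_swap A 0 1, comp2, Fin.isValue, if_true,
    one_ne_zero, if_false, intervalIntegral.integral_const_mul, intervalIntegral.integral_neg,
    intervalIntegral.integral_zero, mul_zero, mul_neg, zero_add, add_zero, Prod.fst_sub,
    Prod.snd_sub]
  -- `ring` also uses `det(y - x, z - x) = det(y - x, z - y)`.
  ring

theorem oneFormExtDeriv_dotCLM_comp {A : ℝ × ℝ → ℝ × ℝ} {p : ℝ × ℝ} (hA : DifferentiableAt ℝ A p)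
    (u v : ℝ × ℝ) :
    oneFormExtDeriv (fun q => dotCLM (A q)) p u v = (u.1 * v.2 - u.2 * v.1) * fieldB A 0 1 p := by
  have hfst : fderiv ℝ (fun q => (A q).1) p = (ContinuousLinearMap.fst ℝ ℝ ℝ).comp (fderiv ℝ A p) :=
    ((ContinuousLinearMap.fst ℝ ℝ ℝ).hasFDerivAt.comp p hA.hasFDerivAt).fderiv
  have hsnd : fderiv ℝ (fun q => (A q).2) p = (ContinuousLinearMap.snd ℝ ℝ ℝ).comp (fderiv ℝ A p) :=
    ((ContinuousLinearMap.snd ℝ ℝ ℝ).hasFDerivAt.comp p hA.hasFDerivAt).fderiv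
  have hdot : fderiv ℝ (fun q => dotCLM (A q)) p = dotCLM.comp (fderiv ℝ A p) :=
    (dotCLM.hasFDerivAt.comp p hA.hasFDerivAt).fderiv
  have hD : ∀ w : ℝ × ℝ, fderiv ℝ A p w = w.1 • fderiv ℝ A p (1, 0) + w.2 • fderiv ℝ A p (0, 1) :=
    fun w => by
      rw [← map_smul, ← map_smul, ← map_add]
      congr 1
      ext <;> simp
  simp only [oneFormExtDeriv, fieldB, pderiv2, comp2, hdot]
  simp only [Fin.isValue, if_true, one_ne_zero, if_false]
  rw [hfst, hsnd]
  simp only [ContinuousLinearMap.coe_comp, Function.comp_apply, ContinuousLinearMap.coe_fst',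
    ContinuousLinearMap.coe_snd', dotCLM_apply_apply, hD u, hD v, Prod.fst_add, Prod.snd_add,
    Prod.smul_fst, Prod.smul_snd, smul_eq_mul]
  ring

theorem stmt17 (A : ℝ × ℝ → ℝ × ℝ) (hA : ContDiff ℝ 1 A) (x y z : ℝ × ℝ) :
    flux A x y z = circulation A x y + circulation A y z + circulation A z x := by
  have hα : ContDiff ℝ 1 fun p => dotCLM (A p) := dotCLM.contDiff.comp hA
  simp only [circulation_eq_segmentIntegral hA.continuous]
  rw [← integral_triangle_eq_sum_segmentIntegral hα,
    flux_eq_integral_det_mul_fieldB]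
  refine intervalIntegral.integral_congr fun t _ => intervalIntegral.integral_congr fun s _ => ?_
  exact (oneFormExtDeriv_dotCLM_comp (hA.differentiable one_ne_zero _) _ _).symm
end

section
/- (i) For every j, k ∈ {−,+} and every α ∈ ℤ²: 𝔾^ε_{(j,α),(k,α)} = δ_{jk}. (ii) For every m ∈ ℕ there exists C_m > 0 such that for all ε > 0, all α, β ∈ ℤ² and all j, k ∈ {−,+}: ⟨α − β⟩^m · |𝔾^ε_{(j,α),(k,β)} − δ_{αβ}·δ_{jk}| ≤ C_m · ε, where ⟨v⟩ := (1 + ‖v‖²)^{1/2}. -/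
/-!
On the diagonal both phases vanish and orthonormality gives (i). Off the diagonal the unperturbed
overlap `∫ conj Ψ_j(x - α) Ψ_k(x - β)` vanishes, so `𝔾 - δ` is, up to a unimodular factor, the
integral of `conj Ψ_j(x - α) (e^{iθ(x)} - 1) Ψ_k(x - β)`, where
`|e^{iθ} - 1| ≤ |θ| ≤ ε |b|/2 ‖α - β‖ ‖x - β‖`.
Peetre's inequality `1 + ‖α - β‖ ≤ (1 + ‖x - α‖)(1 + ‖x - β‖)` moves the weight `⟨α - β⟩^m ‖α - β‖`
onto the two Schwartz functions, whose rapid decay leaves the integrable weight `(1 + ‖x - β‖)⁻³`.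
-/

open MeasureTheory Complex
open scoped SchwartzMap ComplexConjugate

def wedge (u v : EuclideanSpace ℝ (Fin 2)) : ℝ := u 0 * v 1 - u 1 * v 0

theorem abs_wedge_le (u v : EuclideanSpace ℝ (Fin 2)) : |wedge u v| ≤ ‖u‖ * ‖v‖ := by
  rw [← abs_of_nonneg (by positivity : 0 ≤ ‖u‖ * ‖v‖), ← sq_le_sq, mul_pow,
    EuclideanSpace.real_norm_sq_eq, EuclideanSpace.real_norm_sq_eq]
  simp only [wedge, Fin.sum_univ_two]
  nlinarith [sq_nonneg (u 0 * v 0 + u 1 * v 1)]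

theorem norm_exp_I_mul_wedge_sub_one_le (s : ℝ) (u v : EuclideanSpace ℝ (Fin 2)) :
    ‖exp (I * ↑(s * wedge u v)) - 1‖ ≤ |s| * (‖u‖ * ‖v‖) := by
  calc _ ≤ ‖s * wedge u v‖ := Real.norm_exp_I_mul_ofReal_sub_one_le
    _ ≤ |s| * (‖u‖ * ‖v‖) := by
      rw [Real.norm_eq_abs, abs_mul]
      exact mul_le_mul_of_nonneg_left (abs_wedge_le u v) (abs_nonneg s)

theorem one_add_norm_sub_le_mul {E : Type*} [SeminormedAddCommGroup E] (a c x : E) :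
    1 + ‖a - c‖ ≤ (1 + ‖x - a‖) * (1 + ‖x - c‖) := by
  have : ‖a - c‖ ≤ ‖x - a‖ + ‖x - c‖ := by
    simpa [norm_sub_rev x a] using norm_sub_le_norm_sub_add_norm_sub a x c
  nlinarith [norm_nonneg (x - a), norm_nonneg (x - c)]

theorem integrable_inv_one_add_norm_pow {E : Type*} [NormedAddCommGroup E] [NormedSpace ℝ E]
    [FiniteDimensional ℝ E] [MeasurableSpace E] [BorelSpace E] {μ : Measure E}
    [μ.IsAddHaarMeasure] {n : ℕ} (hn : Module.finrank ℝ E < n) :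
    Integrable (fun x => ((1 + ‖x‖) ^ n)⁻¹) μ := by
  have := integrable_one_add_norm (μ := μ) (r := n) (by exact_mod_cast hn)
  refine this.congr (.of_forall fun x => ?_)
  simp only [Real.rpow_neg (by positivity : (0:ℝ) ≤ 1 + ‖x‖), Real.rpow_natCast]

namespace SchwartzMap

variable {E F F' : Type*} [NormedAddCommGroup E] [NormedSpace ℝ E]
  [NormedAddCommGroup F] [NormedSpace ℝ F] [NormedAddCommGroup F'] [NormedSpace ℝ F']

theorem exists_one_add_norm_pow_mul_le (f : 𝓢(E, F)) (k : ℕ) :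
    ∃ C, ∀ x, (1 + ‖x‖) ^ k * ‖f x‖ ≤ C :=
  ⟨_, fun x => by
    simpa using one_add_le_sup_seminorm_apply (𝕜 := ℝ) (m := (k, 0)) le_rfl le_rfl f x⟩

theorem exists_one_add_norm_sub_pow_mul_le (f : 𝓢(E, F)) (g : 𝓢(E, F')) (m n : ℕ) :
    ∃ C, ∀ a c x : E,
      (1 + ‖a - c‖) ^ m * (1 + ‖x - c‖) ^ n * (‖f (x - a)‖ * ‖g (x - c)‖) ≤ C := by
  obtain ⟨A, hA⟩ := f.exists_one_add_norm_pow_mul_le m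
  obtain ⟨B, hB⟩ := g.exists_one_add_norm_pow_mul_le (m + n)
  refine ⟨A * B, fun a c x => ?_⟩
  calc (1 + ‖a - c‖) ^ m * (1 + ‖x - c‖) ^ n * (‖f (x - a)‖ * ‖g (x - c)‖)
      ≤ ((1 + ‖x - a‖) * (1 + ‖x - c‖)) ^ m * (1 + ‖x - c‖) ^ n
          * (‖f (x - a)‖ * ‖g (x - c)‖) := by
        gcongr; exact one_add_norm_sub_le_mul a c x
    _ = ((1 + ‖x - a‖) ^ m * ‖f (x - a)‖) * ((1 + ‖x - c‖) ^ (m + n) * ‖g (x - c)‖) := by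
        rw [mul_pow, pow_add]; ring
    _ ≤ A * B :=
        mul_le_mul (hA _) (hB _) (by positivity) ((by positivity : (0 : ℝ) ≤ _).trans (hA 0))

end SchwartzMap

/-- With `s = -ε * (b / 2)`, `magneticGram s (Ψ j) (Ψ k) α β` is `𝔾^ε_{(j,α),(k,β)}`: the first
factor is `Λ^ε(α, β)` and the one under the integral is `Ω^ε(β, α, x)`. -/
noncomputable def magneticGram (s : ℝ) (f g : 𝓢(EuclideanSpace ℝ (Fin 2), ℂ))
    (a c : EuclideanSpace ℝ (Fin 2)) : ℂ :=
  exp (I * ↑(s * wedge a c)) *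
    ∫ x, conj (f (x - a)) * exp (I * ↑(s * wedge (a - c) (x - c))) * g (x - c)

theorem magneticGram_self (s : ℝ) (f g : 𝓢(EuclideanSpace ℝ (Fin 2), ℂ))
    (a : EuclideanSpace ℝ (Fin 2)) :
    magneticGram s f g a a = ∫ x, conj (f (x - a)) * g (x - a) := by
  simp [magneticGram, wedge, mul_comm]

theorem magneticGram_sub_mul_integral (s : ℝ) (f g : 𝓢(EuclideanSpace ℝ (Fin 2), ℂ))
    (a c : EuclideanSpace ℝ (Fin 2)) :
    magneticGram s f g a c - exp (I * ↑(s * wedge a c)) * ∫ x, conj (f (x - a)) * g (x - c) =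
      exp (I * ↑(s * wedge a c)) *
        ∫ x, conj (f (x - a)) * (exp (I * ↑(s * wedge (a - c) (x - c))) - 1) * g (x - c) := by
  have hg := (g.integrable (μ := volume)).comp_sub_right c
  have hf_le (x : EuclideanSpace ℝ (Fin 2)) : ‖f (x - a)‖ ≤ SchwartzMap.seminorm ℝ 0 0 f :=
    SchwartzMap.norm_le_seminorm ℝ f (x - a)
  have h₀ : Integrable fun x => conj (f (x - a)) * g (x - c) :=
    hg.bdd_mul (by fun_prop) (.of_forall fun x => by simpa using hf_le x)
  have h₁ : Integrable fun x =>
      conj (f (x - a)) * exp (I * ↑(s * wedge (a - c) (x - c))) * g (x - c) := by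
    refine hg.bdd_mul (c := SchwartzMap.seminorm ℝ 0 0 f) ?_ (.of_forall fun x => ?_)
    · simp only [wedge, PiLp.sub_apply]; fun_prop
    · rw [norm_mul, RCLike.norm_conj, mul_comm I, norm_exp_ofReal_mul_I, mul_one]
      exact hf_le x
  rw [magneticGram, ← mul_sub, ← integral_sub h₁ h₀]
  simp_rw [mul_sub, sub_mul, mul_one]

theorem exists_one_add_norm_sub_pow_mul_norm_magneticGram_sub_le
    (f g : 𝓢(EuclideanSpace ℝ (Fin 2), ℂ)) (m : ℕ) :
    ∃ C, ∀ (s : ℝ) (a c : EuclideanSpace ℝ (Fin 2)), (1 + ‖a - c‖) ^ m *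
      ‖magneticGram s f g a c - exp (I * ↑(s * wedge a c)) * ∫ x, conj (f (x - a)) * g (x - c)‖
        ≤ C * |s| := by
  obtain ⟨K, hK⟩ := f.exists_one_add_norm_sub_pow_mul_le g (m + 1) 4
  have hw : Integrable fun x : EuclideanSpace ℝ (Fin 2) => ((1 + ‖x‖) ^ 3)⁻¹ :=
    integrable_inv_one_add_norm_pow (by simp)
  refine ⟨K * ∫ x : EuclideanSpace ℝ (Fin 2), ((1 + ‖x‖) ^ 3)⁻¹, fun s a c => ?_⟩
  rw [magneticGram_sub_mul_integral, norm_mul, mul_comm I, norm_exp_ofReal_mul_I, one_mul]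
  have hpt (x : EuclideanSpace ℝ (Fin 2)) :
      ‖conj (f (x - a)) * (exp (I * ↑(s * wedge (a - c) (x - c))) - 1) * g (x - c)‖
        ≤ |s| * K / (1 + ‖a - c‖) ^ m * ((1 + ‖x - c‖) ^ 3)⁻¹ := by
    rw [← div_eq_mul_inv, div_div, le_div_iff₀ (by positivity)]
    calc _ = ‖f (x - a)‖ * ‖exp (I * ↑(s * wedge (a - c) (x - c))) - 1‖ * ‖g (x - c)‖
            * ((1 + ‖a - c‖) ^ m * (1 + ‖x - c‖) ^ 3) := by
          rw [norm_mul, norm_mul, RCLike.norm_conj]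
      _ ≤ ‖f (x - a)‖ * (|s| * ((1 + ‖a - c‖) * (1 + ‖x - c‖))) * ‖g (x - c)‖
            * ((1 + ‖a - c‖) ^ m * (1 + ‖x - c‖) ^ 3) := by
          gcongr
          refine (norm_exp_I_mul_wedge_sub_one_le s _ _).trans ?_
          gcongr <;> linarith
      _ = |s| * ((1 + ‖a - c‖) ^ (m + 1) * (1 + ‖x - c‖) ^ 4
            * (‖f (x - a)‖ * ‖g (x - c)‖)) := by
          ring
      _ ≤ |s| * K := by gcongr; exact hK a c x
  have hint := norm_integral_le_of_norm_le ((hw.comp_sub_right c).const_mul _) (.of_forall hpt)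
  rw [integral_const_mul,
    integral_sub_right_eq_self (fun x : EuclideanSpace ℝ (Fin 2) => ((1 + ‖x‖) ^ 3)⁻¹) c] at hint
  calc _ ≤ (1 + ‖a - c‖) ^ m * (|s| * K / (1 + ‖a - c‖) ^ m * ∫ x, ((1 + ‖x‖) ^ 3)⁻¹) := by
        gcongr
    _ = K * (∫ x, ((1 + ‖x‖) ^ 3)⁻¹) * |s| := by
        field_simp

theorem stmt18_general (b : ℝ)
    (Ψ : Fin 2 → SchwartzMap (EuclideanSpace ℝ (Fin 2)) ℂ)
    (latt : (Fin 2 → ℤ) → EuclideanSpace ℝ (Fin 2))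
    (hortho : ∀ (j k : Fin 2) (α β : Fin 2 → ℤ),
      ∫ x : EuclideanSpace ℝ (Fin 2),
          (starRingEnd ℂ) (Ψ j (x - latt α)) * Ψ k (x - latt β)
        = (if j = k then 1 else 0) * (if α = β then 1 else 0))
    (G : ℝ → Fin 2 → (Fin 2 → ℤ) → Fin 2 → (Fin 2 → ℤ) → ℂ)
    (hG : ∀ (ε : ℝ) (j : Fin 2) (α : Fin 2 → ℤ) (k : Fin 2) (β : Fin 2 → ℤ),
      G ε j α k β =
        Complex.exp (-Complex.I * (ε : ℂ) * ((b / 2 : ℝ) : ℂ) *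
            ((latt α 0 * latt β 1 - latt α 1 * latt β 0 : ℝ) : ℂ)) *
          ∫ x : EuclideanSpace ℝ (Fin 2),
            (starRingEnd ℂ) (Ψ j (x - latt α)) *
              Complex.exp (-Complex.I * (ε : ℂ) * ((b / 2 : ℝ) : ℂ) *
                (((latt α 0 - latt β 0) * (x 1 - latt β 1)
                    - (latt α 1 - latt β 1) * (x 0 - latt β 0) : ℝ) : ℂ)) *
              Ψ k (x - latt β)) :
    (∀ (ε : ℝ) (j k : Fin 2) (α : Fin 2 → ℤ),
      G ε j α k α = if j = k then 1 else 0) ∧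
    (∀ m : ℕ, ∃ C > (0 : ℝ), ∀ ε > (0 : ℝ), ∀ (α β : Fin 2 → ℤ) (j k : Fin 2),
      Real.sqrt (1 + ‖latt α - latt β‖ ^ 2) ^ m *
          ‖G ε j α k β - (if j = k then 1 else 0) * (if α = β then 1 else 0)‖
        ≤ C * ε) := by
  have hGram (ε j α k β) :
      G ε j α k β = magneticGram (-(ε * (b / 2))) (Ψ j) (Ψ k) (latt α) (latt β) := by
    rw [hG, magneticGram]
    simp only [wedge, PiLp.sub_apply]
    congr 2
    · push_cast; ring
    · funext x; congr 3; push_cast; ring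
  have hdiag (ε j k α) : G ε j α k α = if j = k then 1 else 0 := by
    rw [hGram, magneticGram_self, hortho]; simp
  refine ⟨hdiag, fun m => ?_⟩
  choose C hC using fun p : Fin 2 × Fin 2 =>
    exists_one_add_norm_sub_pow_mul_norm_magneticGram_sub_le (Ψ p.1) (Ψ p.2) m
  obtain ⟨C₀, hC₀⟩ := Finite.bddAbove_range C
  refine ⟨|C₀| * |b| + 1, by positivity, fun ε hε α β j k => ?_⟩
  rcases eq_or_ne α β with rfl | hαβ
  · rw [hdiag, if_pos rfl, mul_one, sub_self (if j = k then (1 : ℂ) else 0), norm_zero, mul_zero]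
    positivity
  have hδ : (if j = k then (1 : ℂ) else 0) * (if α = β then 1 else 0) =
      exp (I * ↑(-(ε * (b / 2)) * wedge (latt α) (latt β))) *
        ∫ x, conj (Ψ j (x - latt α)) * Ψ k (x - latt β) := by
    rw [hortho, if_neg hαβ]; simp
  calc _ ≤ (1 + ‖latt α - latt β‖) ^ m * ‖G ε j α k β - _‖ := by
        gcongr; exact sqrt_one_add_norm_sq_le _
    _ ≤ C (j, k) * |-(ε * (b / 2))| := by rw [hGram, hδ]; exact hC (j, k) _ _ _
    _ ≤ |C₀| * (ε * (|b| / 2)) := by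
        rw [abs_neg, abs_mul, abs_of_pos hε, abs_div, abs_two]
        gcongr
        exact (hC₀ ⟨(j, k), rfl⟩).trans (le_abs_self C₀)
    _ ≤ (|C₀| * |b| + 1) * ε := by nlinarith [mul_nonneg (abs_nonneg C₀) (abs_nonneg b)]

theorem stmt18 (b : ℝ) (hb : 0 < b)
    (Ψ : Fin 2 → SchwartzMap (EuclideanSpace ℝ (Fin 2)) ℂ)
    (latt : (Fin 2 → ℤ) → EuclideanSpace ℝ (Fin 2))
    (hlatt : ∀ a i, latt a i = (a i : ℝ))
    (hortho : ∀ (j k : Fin 2) (α β : Fin 2 → ℤ),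
      ∫ x : EuclideanSpace ℝ (Fin 2),
          (starRingEnd ℂ) (Ψ j (x - latt α)) * Ψ k (x - latt β)
        = (if j = k then 1 else 0) * (if α = β then 1 else 0))
    (G : ℝ → Fin 2 → (Fin 2 → ℤ) → Fin 2 → (Fin 2 → ℤ) → ℂ)
    (hG : ∀ (ε : ℝ) (j : Fin 2) (α : Fin 2 → ℤ) (k : Fin 2) (β : Fin 2 → ℤ),
      G ε j α k β =
        Complex.exp (-Complex.I * (ε : ℂ) * ((b / 2 : ℝ) : ℂ) *
            ((latt α 0 * latt β 1 - latt α 1 * latt β 0 : ℝ) : ℂ)) *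
          ∫ x : EuclideanSpace ℝ (Fin 2),
            (starRingEnd ℂ) (Ψ j (x - latt α)) *
              Complex.exp (-Complex.I * (ε : ℂ) * ((b / 2 : ℝ) : ℂ) *
                (((latt α 0 - latt β 0) * (x 1 - latt β 1)
                    - (latt α 1 - latt β 1) * (x 0 - latt β 0) : ℝ) : ℂ)) *
              Ψ k (x - latt β)) :
    (∀ (ε : ℝ) (j k : Fin 2) (α : Fin 2 → ℤ),
      G ε j α k α = if j = k then 1 else 0) ∧
    (∀ m : ℕ, ∃ C > (0 : ℝ), ∀ ε > (0 : ℝ), ∀ (α β : Fin 2 → ℤ) (j k : Fin 2),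
      Real.sqrt (1 + ‖latt α - latt β‖ ^ 2) ^ m *
          ‖G ε j α k β - (if j = k then 1 else 0) * (if α = β then 1 else 0)‖
        ≤ C * ε) :=
  stmt18_general b Ψ latt hortho G hG
end
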